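/- arXiv:2604.19963 — 4 statements merged into one kernel-verified Lean document; each statement's English description precedes it below -/
import Mathlib

section
/- The class of languages generated by ordered cooperating distributed grammar systems in the t-mode equals the class of languages generated by ordered grammars, both when erasing productions are allowed and when they are disallowed: OCD(t) = ORD and OCD^{-λ}(t) = ORD^{-λ}. -/
namespace GrammarSystems

/-! Symbols: nonterminals are (encoded as) natural numbers, terminals come from `T`. -/

/-- A symbol is either a nonterminal (a natural number) or a terminal from `T`. -/
abbrev Sym (T : Type) := ℕ ⊕ T

/-- A sentential form: a word over `N ∪ Σ`. -/
abbrev Word (T : Type) := List (Sym T)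

/-- A context-free production `A → y`. -/
structure CFRule (T : Type) where
  lhs : ℕ
  rhs : Word T

/-- A production is erasing if its right-hand side is the empty word `λ`. -/
def CFRule.Erasing {T : Type} (r : CFRule T) : Prop := r.rhs = []

/-- One rewriting step `u = xAz ⇒ xyz = v` using the rule `r = A → y`. -/
def CFRule.Rewrites {T : Type} (r : CFRule T) (u v : Word T) : Prop :=
  ∃ x z : Word T, u = x ++ [Sum.inl r.lhs] ++ z ∧ v = x ++ r.rhs ++ z

/-- Ordinary one-step context-free derivation of a set (list) of productions. -/
def cfStep {T : Type} (P : List (CFRule T)) (u v : Word T) : Prop :=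
  ∃ r ∈ P, r.Rewrites u v

/-- `iter r n u v` : `u` derives `v` in exactly `n` steps of the relation `r`. -/
def iter {α : Type*} (r : α → α → Prop) : ℕ → α → α → Prop
  | 0 => Eq
  | n + 1 => fun u v => ∃ w, r u w ∧ iter r n w v

/-- The derivation modes of CD grammar systems: `≤ k`, `= k`, `≥ k`, `*` and `t`. -/
inductive Mode where
  | le (k : ℕ)
  | eq (k : ℕ)
  | ge (k : ℕ)
  | star
  | t

/-- The mode relation induced by a one-step derivation relation `r`. -/
def ModeRel {α : Type*} (r : α → α → Prop) : Mode → α → α → Prop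
  | .le k => fun u v => ∃ j, 1 ≤ j ∧ j ≤ k ∧ iter r j u v
  | .eq k => iter r k
  | .ge k => fun u v => ∃ j, k ≤ j ∧ iter r j u v
  | .star => Relation.ReflTransGen r
  | .t => fun u v => Relation.ReflTransGen r u v ∧ ∀ w, ¬ r v w

/-- A terminal word viewed as a sentential form. -/
def encodeWord {T : Type} (w : List T) : Word T := w.map Sum.inr

/-- The language generated from start symbol `S` by iterating the relation `step`. -/
def langOf {T : Type} (step : Word T → Word T → Prop) (S : ℕ) : Language T :=
  {w | Relation.ReflTransGen step [Sum.inl S] (encodeWord w)}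

/-! ### Ordered grammars and ordered CD grammar systems -/

/-- A component of an ordered CD grammar system: a finite set of context-free
productions together with a strict order (transitive and asymmetric) on rules. -/
structure OComponent (T : Type) where
  rules : List (CFRule T)
  gt : CFRule T → CFRule T → Prop
  gt_trans : ∀ {p q r}, gt p q → gt q r → gt p r
  gt_asymm : ∀ {p q}, gt p q → ¬ gt q p

/-- One-step derivation of an ordered grammar (component): apply a rule only if
no strictly greater rule has its left-hand side occurring in the sentential form. -/
def OComponent.Step {T : Type} (C : OComponent T) (u v : Word T) : Prop :=
  ∃ r ∈ C.rules, r.Rewrites u v ∧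
    ∀ r' ∈ C.rules, C.gt r' r → Sum.inl r'.lhs ∉ u

/-- A component has no erasing productions. -/
def OComponent.NonErasing {T : Type} (C : OComponent T) : Prop :=
  ∀ r ∈ C.rules, ¬ r.Erasing

/-- An ordered cooperating distributed grammar system (OCDGS). -/
structure OCDGS (T : Type) where
  comps : List (OComponent T)
  start : ℕ

/-- The derivation relation `⇒_{G,m}` of an OCDGS in mode `m`. -/
def OCDGS.SysStep {T : Type} (G : OCDGS T) (m : Mode) (u v : Word T) : Prop :=
  ∃ C ∈ G.comps, ModeRel C.Step m u v

/-- The language of an OCDGS in mode `m`. -/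
def OCDGS.lang {T : Type} (G : OCDGS T) (m : Mode) : Language T :=
  langOf (G.SysStep m) G.start

/-- An OCDGS without erasing productions. -/
def OCDGS.NonErasing {T : Type} (G : OCDGS T) : Prop :=
  ∀ C ∈ G.comps, C.NonErasing

/-- The class `OCD(m)`. -/
def OCD (T : Type) (m : Mode) : Set (Language T) :=
  {L | ∃ G : OCDGS T, L = G.lang m}

/-- The class `OCD^{-λ}(m)`. -/
def OCDne (T : Type) (m : Mode) : Set (Language T) :=
  {L | ∃ G : OCDGS T, G.NonErasing ∧ L = G.lang m}

/-- The class `OCDₙ(m)`: at most `n` components. -/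
def OCDbound (T : Type) (n : ℕ) (m : Mode) : Set (Language T) :=
  {L | ∃ G : OCDGS T, G.comps.length ≤ n ∧ L = G.lang m}

/-- The class `OCDₙ^{-λ}(m)`. -/
def OCDboundNE (T : Type) (n : ℕ) (m : Mode) : Set (Language T) :=
  {L | ∃ G : OCDGS T, G.comps.length ≤ n ∧ G.NonErasing ∧ L = G.lang m}

/-- The class `ORD` of languages of ordered grammars. -/
def ORD (T : Type) : Set (Language T) :=
  {L | ∃ (C : OComponent T) (S : ℕ), L = langOf C.Step S}

/-- The class `ORD^{-λ}`. -/
def ORDne (T : Type) : Set (Language T) :=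
  {L | ∃ (C : OComponent T) (S : ℕ), C.NonErasing ∧ L = langOf C.Step S}

/-! ### Forbidden random context grammars and CD grammar systems -/

/-- A forbidden random context rule `(A → y, F)`. -/
structure FRCRule (T : Type) where
  lhs : ℕ
  rhs : Word T
  forb : Finset ℕ

/-- One-step derivation of a forbidden random context grammar (component). -/
def frcStep {T : Type} (P : List (FRCRule T)) (u v : Word T) : Prop :=
  ∃ r ∈ P, (∃ x z : Word T, u = x ++ [Sum.inl r.lhs] ++ z ∧ v = x ++ r.rhs ++ z) ∧
    ∀ A ∈ r.forb, Sum.inl A ∉ u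

/-- A forbidden random context CD grammar system (fRCCDGS). -/
structure FRCCDGS (T : Type) where
  comps : List (List (FRCRule T))
  start : ℕ

/-- The derivation relation `⇒_{G,m}` of an fRCCDGS in mode `m`. -/
def FRCCDGS.SysStep {T : Type} (G : FRCCDGS T) (m : Mode) (u v : Word T) : Prop :=
  ∃ P ∈ G.comps, ModeRel (frcStep P) m u v

/-- The language of an fRCCDGS in mode `m`. -/
def FRCCDGS.lang {T : Type} (G : FRCCDGS T) (m : Mode) : Language T :=
  langOf (G.SysStep m) G.start

/-- An fRCCDGS without erasing productions. -/
def FRCCDGS.NonErasing {T : Type} (G : FRCCDGS T) : Prop :=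
  ∀ P ∈ G.comps, ∀ r ∈ P, r.rhs ≠ []

/-- The class `fRCCD(m)`. -/
def fRCCD (T : Type) (m : Mode) : Set (Language T) :=
  {L | ∃ G : FRCCDGS T, L = G.lang m}

/-- The class `fRCCD^{-λ}(m)`. -/
def fRCCDne (T : Type) (m : Mode) : Set (Language T) :=
  {L | ∃ G : FRCCDGS T, G.NonErasing ∧ L = G.lang m}

/-- The class `fRCCDₙ(m)`: at most `n` components. -/
def fRCCDbound (T : Type) (n : ℕ) (m : Mode) : Set (Language T) :=
  {L | ∃ G : FRCCDGS T, G.comps.length ≤ n ∧ L = G.lang m}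

/-- The class `fRCCDₙ^{-λ}(m)`. -/
def fRCCDboundNE (T : Type) (n : ℕ) (m : Mode) : Set (Language T) :=
  {L | ∃ G : FRCCDGS T, G.comps.length ≤ n ∧ G.NonErasing ∧ L = G.lang m}

/-- The class `fRC` of languages of single forbidden random context grammars. -/
def fRC (T : Type) : Set (Language T) :=
  {L | ∃ (P : List (FRCRule T)) (S : ℕ), L = langOf (frcStep P) S}

/-- The class `fRC^{-λ}`. -/
def fRCne (T : Type) : Set (Language T) :=
  {L | ∃ (P : List (FRCRule T)) (S : ℕ), (∀ r ∈ P, r.rhs ≠ []) ∧ L = langOf (frcStep P) S}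

/-! ### Graph-controlled grammars with appearance checking -/

/-- A rule of a graph-controlled grammar: a context-free production together with
a success field and a failure field (sets of labels). The label of a rule is its
index in the rule list, so the labeling is automatically injective. -/
structure GCRule (T : Type) where
  prod : CFRule T
  succ : Finset ℕ
  fail : Finset ℕ

/-- A graph-controlled grammar with appearance checking. -/
structure GCGrammar (T : Type) where
  rules : List (GCRule T)
  init : Finset ℕ
  final : Finset ℕ
  start : ℕ

/-- One-step derivation on configurations `(sentential form, label)`:
either the production of the current rule is applied and we move to a label of the
success field, or it is not applicable (its left-hand side does not occur) and we
move, without changing the sentential form, to a label of the failure field. -/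
def GCGrammar.Step {T : Type} (G : GCGrammar T) :
    (Word T × ℕ) → (Word T × ℕ) → Prop := fun c c' =>
  ∃ r, G.rules[c.2]? = some r ∧
    ((r.prod.Rewrites c.1 c'.1 ∧ c'.2 ∈ r.succ) ∨
     (Sum.inl r.prod.lhs ∉ c.1 ∧ c'.1 = c.1 ∧ c'.2 ∈ r.fail))

/-- The language of a graph-controlled grammar: terminal words reachable from
`(S, ℓ₀)` with `ℓ₀` initial, in at least one step, ending in a final label. -/
def GCGrammar.lang {T : Type} (G : GCGrammar T) : Language T :=
  {w | ∃ l₀ ∈ G.init, ∃ lf ∈ G.final,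
    Relation.TransGen G.Step ([Sum.inl G.start], l₀) (encodeWord w, lf)}

/-- A graph-controlled grammar without erasing productions. -/
def GCGrammar.NonErasing {T : Type} (G : GCGrammar T) : Prop :=
  ∀ r ∈ G.rules, r.prod.rhs ≠ []

/-- The class `GC_ac`. -/
def GCac (T : Type) : Set (Language T) :=
  {L | ∃ G : GCGrammar T, L = G.lang}

/-- The class `GC_ac^{-λ}`. -/
def GCacNE (T : Type) : Set (Language T) :=
  {L | ∃ G : GCGrammar T, G.NonErasing ∧ L = G.lang}

/-! ### Recursively enumerable languages -/

/-- The class `RE` of recursively enumerable languages over `T`: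
those whose membership predicate is computably enumerable. -/
def REclass (T : Type) [Primcodable T] : Set (Language T) :=
  {L | REPred (· ∈ L)}

/-! ### CD grammar systems with random context entry conditions -/

/-- A component of a CD grammar system with random context entry conditions:
a set of context-free productions with permitting set `perm` and forbidding set `forb`. -/
structure RCComponent (T : Type) where
  rules : List (CFRule T)
  perm : Finset ℕ
  forb : Finset ℕ

/-- `u ⇒ᵢ^{m,rc} v` for a component with random context entry conditions. -/
def RCComponent.Step {T : Type} (C : RCComponent T) (m : Mode) (u v : Word T) : Prop :=
  ModeRel (cfStep C.rules) m u v ∧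
    (∀ A ∈ C.perm, Sum.inl A ∈ u) ∧ (∀ A ∈ C.forb, Sum.inl A ∉ u)

/-- A CD grammar system with random context entry conditions. -/
structure RCCDGS (T : Type) where
  comps : List (RCComponent T)
  start : ℕ

/-- The derivation relation `⇒_{G,m,rc}`. -/
def RCCDGS.SysStep {T : Type} (G : RCCDGS T) (m : Mode) (u v : Word T) : Prop :=
  ∃ C ∈ G.comps, C.Step m u v

/-- The language `L(G, m, rc)`. -/
def RCCDGS.lang {T : Type} (G : RCCDGS T) (m : Mode) : Language T :=
  langOf (G.SysStep m) G.start

/-- No erasing productions. -/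
def RCCDGS.NonErasing {T : Type} (G : RCCDGS T) : Prop :=
  ∀ C ∈ G.comps, ∀ r ∈ C.rules, r.rhs ≠ []

/-- The class `CD(m, rc)`. -/
def CDrc (T : Type) (m : Mode) : Set (Language T) :=
  {L | ∃ G : RCCDGS T, L = G.lang m}

/-- The class `CD^{-λ}(m, rc)`. -/
def CDrcNE (T : Type) (m : Mode) : Set (Language T) :=
  {L | ∃ G : RCCDGS T, G.NonErasing ∧ L = G.lang m}

/-- The class `CD(m, frc)`: all permitting sets empty. -/
def CDfrc (T : Type) (m : Mode) : Set (Language T) :=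
  {L | ∃ G : RCCDGS T, (∀ C ∈ G.comps, C.perm = ∅) ∧ L = G.lang m}

/-- The class `CD^{-λ}(m, frc)`. -/
def CDfrcNE (T : Type) (m : Mode) : Set (Language T) :=
  {L | ∃ G : RCCDGS T, (∀ C ∈ G.comps, C.perm = ∅) ∧ G.NonErasing ∧ L = G.lang m}

/-- The class `CD(m)` of ordinary CD grammar systems: all context conditions empty. -/
def CD (T : Type) (m : Mode) : Set (Language T) :=
  {L | ∃ G : RCCDGS T, (∀ C ∈ G.comps, C.perm = ∅ ∧ C.forb = ∅) ∧ L = G.lang m}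

/-- The class `CD^{-λ}(m)`. -/
def CDne (T : Type) (m : Mode) : Set (Language T) :=
  {L | ∃ G : RCCDGS T, (∀ C ∈ G.comps, C.perm = ∅ ∧ C.forb = ∅) ∧ G.NonErasing ∧
    L = G.lang m}

/-! ### CD grammar systems with priorities -/

/-- A CD grammar system with priorities: components with a strict order
(transitive and asymmetric) on (indices of) components. -/
structure PCDGS (T : Type) where
  comps : List (List (CFRule T))
  gt : Fin comps.length → Fin comps.length → Prop
  gt_trans : ∀ {i j k}, gt i j → gt j k → gt i k
  gt_asymm : ∀ {i j}, gt i j → ¬ gt j i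

theorem PCDGS.gt_wf {T : Type} (G : PCDGS T) : WellFounded G.gt := by
  have h1 : IsTrans (Fin G.comps.length) G.gt := ⟨fun _ _ _ => G.gt_trans⟩
  have h2 : IsIrrefl (Fin G.comps.length) G.gt := ⟨fun _ h => G.gt_asymm h h⟩
  exact Finite.wellFounded_of_trans_of_irrefl G.gt

/-- Start symbol comes separately (so that `gt` can mention `comps.length`). -/
structure PCDGSs (T : Type) extends PCDGS T where
  start : ℕ

/-- `G.Enabled m i x` : component `i` can make a prioritized `m`-mode step from `x`,
defined by recursion along the (well-founded) strict order `>`: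
component `i` is enabled iff it can make an (unprioritized) `m`-step and no
component of higher priority is enabled. -/
def PCDGS.Enabled {T : Type} (G : PCDGS T) (m : Mode) :
    Fin G.comps.length → Word T → Prop :=
  G.gt_wf.fix (C := fun _ => Word T → Prop) fun i ih x =>
    (∃ z, ModeRel (cfStep (G.comps.get i)) m x z) ∧
    ∀ (j : Fin G.comps.length) (h : G.gt j i), ¬ ih j h x

/-- The prioritized derivation relation `⇒_{m,>}`: `u ⇒ᵢ^{m,>} v` iff `u ⇒ᵢ^{m} v`
and no component of strictly higher priority can make a prioritized `m`-step from `u`. -/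
def PCDGS.PStep {T : Type} (G : PCDGS T) (m : Mode) (u v : Word T) : Prop :=
  ∃ i : Fin G.comps.length,
    ModeRel (cfStep (G.comps.get i)) m u v ∧
    ∀ j : Fin G.comps.length, G.gt j i → ¬ G.Enabled m j u

/-- The language `L_m(G)` of a PCDGS. -/
def PCDGSs.lang {T : Type} (G : PCDGSs T) (m : Mode) : Language T :=
  langOf (G.toPCDGS.PStep m) G.start

/-- No erasing productions. -/
def PCDGSs.NonErasing {T : Type} (G : PCDGSs T) : Prop :=
  ∀ P ∈ G.comps, ∀ r ∈ P, r.rhs ≠ []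

/-- The class `PCD(m)`. -/
def PCD (T : Type) (m : Mode) : Set (Language T) :=
  {L | ∃ G : PCDGSs T, L = G.lang m}

/-- The class `PCD^{-λ}(m)`. -/
def PCDne (T : Type) (m : Mode) : Set (Language T) :=
  {L | ∃ G : PCDGSs T, G.NonErasing ∧ L = G.lang m}

end GrammarSystems

open GrammarSystems


/-! ### Auxiliary development for `OCD(t) = ORD` -/

namespace OCDtoORD

open Relation GrammarSystems

variable {T : Type}

/-- Every nonempty list has a maximal element (w.r.t. an asymmetric transitive
relation) among those satisfying `P`. -/
lemma exists_maximal {α : Type*} {R : α → α → Prop}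
    (htrans : ∀ {p q r}, R p q → R q r → R p r)
    (hasymm : ∀ {p q}, R p q → ¬ R q p)
    (P : α → Prop) :
    ∀ l : List α, (∃ x ∈ l, P x) → ∃ m ∈ l, P m ∧ ∀ x ∈ l, P x → ¬ R x m := by
  intro l
  induction l with
  | nil => rintro ⟨x, hx, -⟩; cases hx
  | cons a l ih =>
    rintro ⟨x, hx, hPx⟩
    by_cases hl : ∃ x ∈ l, P x
    · obtain ⟨m, hm, hPm, hmax⟩ := ih hl
      by_cases hRa : P a ∧ R a m
      · refine ⟨a, List.mem_cons_self, hRa.1, ?_⟩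
        rintro y hy hPy hRya
        rcases List.mem_cons.mp hy with rfl | hy
        · exact hasymm hRya hRya
        · exact hmax y hy hPy (htrans hRya hRa.2)
      · refine ⟨m, List.mem_cons_of_mem _ hm, hPm, ?_⟩
        rintro y hy hPy hRym
        rcases List.mem_cons.mp hy with rfl | hy
        · exact hRa ⟨hPy, hRym⟩
        · exact hmax y hy hPy hRym
    · rcases List.mem_cons.mp hx with rfl | hx'
      · refine ⟨x, List.mem_cons_self, hPx, ?_⟩
        rintro y hy hPy hR
        rcases List.mem_cons.mp hy with rfl | hy
        · exact hasymm hR hR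
        · exact hl ⟨y, hy, hPy⟩
      · exact absurd ⟨x, hx', hPx⟩ hl

/-- A sentential form is dead for an ordered component iff no left-hand side of a
rule of the component occurs in it. -/
lemma dead_iff_no_lhs (C : OComponent T) (v : Word T) :
    (∀ w, ¬ C.Step v w) ↔ ∀ r ∈ C.rules, Sum.inl r.lhs ∉ v := by
  constructor
  · intro hdead r hr hocc
    obtain ⟨m, hm, hoccm, hmax⟩ := exists_maximal (R := C.gt)
      (fun h1 h2 => C.gt_trans h1 h2) (fun h => C.gt_asymm h)
      (fun r => Sum.inl r.lhs ∈ v) C.rules ⟨r, hr, hocc⟩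
    obtain ⟨s, t, hst⟩ := List.append_of_mem hoccm
    exact hdead (s ++ m.rhs ++ t)
      ⟨m, hm, ⟨s, t, by simpa using hst, rfl⟩,
        fun r' hr' hgt hocc' => hmax r' hr' hocc' hgt⟩
  · rintro h w ⟨r, hr, ⟨x, z, rfl, rfl⟩, -⟩
    exact h r hr (by simp)

/-! #### Tagged symbols -/

/-- Encoding of a tagged nonterminal `⟨A, i⟩`. -/
def ee (A i : ℕ) : ℕ := Nat.pair A i + 1

lemma ee_inj {A i B j : ℕ} (h : ee A i = ee B j) : A = B ∧ i = j := by
  have := Nat.succ_injective h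
  exact Nat.pair_eq_pair.mp this

lemma ee_ne_zero (A i : ℕ) : ee A i ≠ 0 := Nat.succ_ne_zero _

def tagS (i : ℕ) : Sym T → Sym T := Sum.map (fun A => ee A i) id

def tagW (i : ℕ) (w : Word T) : Word T := w.map (tagS i)

def untagS : Sym T → Sym T := Sum.map (fun c => (Nat.unpair (c - 1)).1) id

def untagW (w : Word T) : Word T := w.map untagS

lemma untagS_tagS (i : ℕ) (s : Sym T) : untagS (tagS i s) = s := by
  cases s with
  | inl A => simp [untagS, tagS, ee, Nat.unpair_pair]
  | inr t => simp [untagS, tagS]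

lemma untagW_tagW (i : ℕ) (w : Word T) : untagW (tagW i w) = w := by
  simp only [untagW, tagW, List.map_map]
  conv_rhs => rw [← List.map_id w]
  exact List.map_congr_left fun s _ => untagS_tagS i s

lemma untagW_append (u v : Word T) : untagW (u ++ v) = untagW u ++ untagW v :=
  List.map_append

lemma tagW_append (i : ℕ) (u v : Word T) : tagW i (u ++ v) = tagW i u ++ tagW i v :=
  List.map_append

lemma untagS_ee (A i : ℕ) : untagS (T := T) (Sum.inl (ee A i)) = Sum.inl A := by
  simp [untagS, ee, Nat.unpair_pair]

lemma tagW_encode (i : ℕ) (w : List T) : tagW i (encodeWord w) = encodeWord w := by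
  simp only [tagW, encodeWord, List.map_map]
  exact List.map_congr_left fun a _ => rfl

lemma untagW_encode (w : List T) : untagW (T := T) (encodeWord w) = encodeWord w := by
  simp only [untagW, encodeWord, List.map_map]
  exact List.map_congr_left fun a _ => rfl

lemma inl_mem_untagW {u : Word T} {B : ℕ} :
    Sum.inl B ∈ untagW u ↔ ∃ c, Sum.inl c ∈ u ∧ (Nat.unpair (c - 1)).1 = B := by
  constructor
  · intro h
    obtain ⟨s, hs, hseq⟩ := List.mem_map.mp h
    cases s with
    | inl c =>
      refine ⟨c, hs, ?_⟩
      simpa [untagS] using hseq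
    | inr t => simp [untagS] at hseq
  · rintro ⟨c, hc, rfl⟩
    exact List.mem_map.mpr ⟨Sum.inl c, hc, rfl⟩

lemma inl_mem_tagW {u : Word T} {c i : ℕ} :
    Sum.inl c ∈ tagW i u ↔ ∃ A, Sum.inl A ∈ u ∧ c = ee A i := by
  constructor
  · intro h
    obtain ⟨s, hs, hseq⟩ := List.mem_map.mp h
    cases s with
    | inl A => exact ⟨A, hs, by simpa [tagS] using hseq.symm⟩
    | inr t => simp [tagS] at hseq
  · rintro ⟨A, hA, rfl⟩
    exact List.mem_map.mpr ⟨Sum.inl A, hA, rfl⟩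

/-! #### The simulating ordered grammar -/

variable (G : OCDGS T)

/-- Number of components. -/
abbrev nn : ℕ := G.comps.length

/-- The `i`-th component. -/
abbrev comp (i : Fin (nn G)) : OComponent T := G.comps.get i

lemma comp_mem (i : Fin (nn G)) : comp G i ∈ G.comps := List.get_mem G.comps i

/-- All nonterminals appearing in the system. -/
def ntl : List ℕ :=
  G.start :: G.comps.flatMap fun C => C.rules.flatMap fun r =>
    r.lhs :: r.rhs.filterMap Sum.getLeft?

lemma start_mem_ntl : G.start ∈ ntl G := List.mem_cons_self

lemma lhs_mem_ntl {C : OComponent T} (hC : C ∈ G.comps) {r : CFRule T}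
    (hr : r ∈ C.rules) : r.lhs ∈ ntl G := by
  refine List.mem_cons_of_mem _ (List.mem_flatMap.mpr ⟨C, hC, List.mem_flatMap.mpr
    ⟨r, hr, List.mem_cons_self⟩⟩)

lemma rhs_mem_ntl {C : OComponent T} (hC : C ∈ G.comps) {r : CFRule T}
    (hr : r ∈ C.rules) {A : ℕ} (hA : Sum.inl A ∈ r.rhs) : A ∈ ntl G := by
  refine List.mem_cons_of_mem _ (List.mem_flatMap.mpr ⟨C, hC, List.mem_flatMap.mpr
    ⟨r, hr, List.mem_cons_of_mem _ (List.mem_filterMap.mpr ⟨Sum.inl A, hA, rfl⟩)⟩⟩)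

/-- Initial rules `S* → ⟨S, i⟩`. -/
def initR (i : ℕ) : CFRule T := ⟨0, [Sum.inl (ee G.start i)]⟩

/-- Simulation rules. -/
def simR (i : ℕ) (r : CFRule T) : CFRule T := ⟨ee r.lhs i, tagW i r.rhs⟩

/-- Switch rules `⟨A,i⟩ → ⟨A,j⟩` (for `i = j` these are no-op rules). -/
def swR (A i j : ℕ) : CFRule T := ⟨ee A i, [Sum.inl (ee A j)]⟩

/-- A no-op rule value. -/
def IsNoop (p : CFRule T) : Prop := ∃ A i, p = swR A i i

lemma isNoop_swR {A i j : ℕ} : IsNoop (T := T) (swR A i j) ↔ j = i := by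
  constructor
  · rintro ⟨B, k, h⟩
    obtain ⟨h1, h2⟩ := CFRule.mk.injEq .. ▸ h
    obtain ⟨rfl, rfl⟩ := ee_inj h1
    have := List.head_eq_of_cons_eq h2
    have := ee_inj (Sum.inl.injEq .. ▸ this)
    omega
  · rintro rfl; exact ⟨_, _, rfl⟩

lemma simR_inj {i i' : ℕ} {r r' : CFRule T} (h : simR i r = simR i' r') :
    i = i' ∧ r = r' := by
  obtain ⟨h1, h2⟩ := CFRule.mk.injEq .. ▸ h
  obtain ⟨hl, hi⟩ := ee_inj h1
  subst hi
  refine ⟨rfl, ?_⟩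
  have hrhs : r.rhs = r'.rhs := by
    have := congrArg (untagW (T := T)) h2
    simpa [untagW_tagW] using this
  cases r; cases r'; simp_all

lemma simR_eq_swR {i A i' j : ℕ} {r : CFRule T} (h : simR i r = swR A i' j) :
    i = i' ∧ i = j := by
  obtain ⟨h1, h2⟩ := CFRule.mk.injEq .. ▸ h
  obtain ⟨hl, hi⟩ := ee_inj h1
  subst hi
  refine ⟨rfl, ?_⟩
  cases hr : r.rhs with
  | nil => rw [hr] at h2; simp [tagW] at h2
  | cons s w =>
    rw [hr] at h2
    cases s with
    | inl B =>
      simp only [tagW, List.map_cons, tagS, Sum.map_inl, id] at h2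
      have := List.head_eq_of_cons_eq h2
      have := ee_inj (Sum.inl.injEq .. ▸ this)
      omega
    | inr t =>
      simp only [tagW, List.map_cons, tagS, Sum.map_inr, id] at h2
      exact absurd (List.head_eq_of_cons_eq h2) (by simp)

lemma swR_inj {A i j A' i' j' : ℕ} (h : swR (T := T) A i j = swR A' i' j') :
    A = A' ∧ i = i' ∧ j = j' := by
  obtain ⟨h1, h2⟩ := CFRule.mk.injEq .. ▸ h
  obtain ⟨rfl, rfl⟩ := ee_inj h1
  have := List.head_eq_of_cons_eq h2
  have := ee_inj (Sum.inl.injEq .. ▸ this)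
  exact ⟨rfl, rfl, this.2⟩

lemma initR_ne_simR {i j : ℕ} {r : CFRule T} : initR G i ≠ simR j r := by
  intro h
  exact ee_ne_zero r.lhs j (CFRule.mk.injEq .. ▸ h).1.symm

lemma initR_ne_swR {i A i' j : ℕ} : initR G i ≠ swR A i' j := by
  intro h
  exact ee_ne_zero A i' (CFRule.mk.injEq .. ▸ h).1.symm

/-- Left-hand sides of a component. -/
def lhsl (C : OComponent T) : List ℕ := C.rules.map CFRule.lhs

/-- The rules of the simulating ordered grammar. -/
def rulesStar : List (CFRule T) :=
  ((List.range (nn G)).map (initR G))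
  ++ ((List.finRange (nn G)).flatMap fun i => (comp G i).rules.map (simR i.val))
  ++ ((ntl G).flatMap fun A => (List.finRange (nn G)).flatMap fun i =>
        (List.finRange (nn G)).map fun j => swR A i.val j.val)

lemma mem_rulesStar {q : CFRule T} :
    q ∈ rulesStar G ↔
      (∃ i < nn G, q = initR G i) ∨
      (∃ i : Fin (nn G), ∃ r ∈ (comp G i).rules, q = simR i.val r) ∨
      (∃ A ∈ ntl G, ∃ i j : Fin (nn G), q = swR A i.val j.val) := by
  simp only [rulesStar, List.mem_append, List.mem_map, List.mem_flatMap,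
    List.mem_range, List.mem_finRange]
  constructor
  · rintro ((⟨i, hi, rfl⟩ | ⟨i, -, r, hr, rfl⟩) | ⟨A, hA, i, -, j, -, rfl⟩)
    · exact Or.inl ⟨i, hi, rfl⟩
    · exact Or.inr (Or.inl ⟨i, r, hr, rfl⟩)
    · exact Or.inr (Or.inr ⟨A, hA, i, j, rfl⟩)
  · rintro (⟨i, hi, rfl⟩ | ⟨i, r, hr, rfl⟩ | ⟨A, hA, i, j, rfl⟩)
    · exact Or.inl (Or.inl ⟨i, hi, rfl⟩)
    · exact Or.inl (Or.inr ⟨i, trivial, r, hr, rfl⟩)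
    · exact Or.inr ⟨A, hA, i, trivial, j, trivial, rfl⟩

/-- The order of the simulating grammar. -/
def gtStar (p q : CFRule T) : Prop :=
  ¬ IsNoop q ∧
  ( (∃ A i₁, ∃ j : Fin (nn G), ∃ r, r ∈ (comp G j).rules ∧
        p = swR A i₁ i₁ ∧ q = simR j.val r ∧ i₁ ≠ j.val)
  ∨ (∃ B, ∃ i : Fin (nn G), ∃ A j, B ∈ lhsl (comp G i) ∧
        p = swR B i.val i.val ∧ q = swR A i.val j)
  ∨ (∃ i : Fin (nn G), ∃ r r', r ∈ (comp G i).rules ∧ r' ∈ (comp G i).rules ∧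
        (comp G i).gt r' r ∧ p = simR i.val r' ∧ q = simR i.val r) )

lemma gtStar_trans {p q s : CFRule T} (h1 : gtStar G p q) (h2 : gtStar G q s) :
    gtStar G p s := by
  obtain ⟨hq, h1⟩ := h1
  obtain ⟨hs, h2⟩ := h2
  refine ⟨hs, ?_⟩
  -- the middle `q` is not a no-op, so the second edge cannot have a no-op left side;
  -- hence the second edge is a γ-edge with `q` a sim value
  rcases h2 with ⟨A, i₁, j, r, hr, hql, -, -⟩ | ⟨B, i, A, j, hB, hql, -⟩ |
    ⟨i₂, r₂, r₂', hr₂, hr₂', hgt₂, hql, hs_eq⟩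
  · exact absurd ⟨A, i₁, hql⟩ hq
  · exact absurd ⟨B, i.val, hql⟩ hq
  -- now q = simR i₂ r₂'
  rcases h1 with ⟨A, i₁, j, r, hr, hpl, hqeq, hne⟩ | ⟨B, i, A, j, hB, hpl, hqeq⟩ |
    ⟨i₃, r₃, r₃', hr₃, hr₃', hgt₃, hpl, hqeq⟩
  · -- p is a no-op with tag i₁ ≠ j, q = simR j r = simR i₂ r₂'
    obtain ⟨hij, hrr⟩ := simR_inj (hqeq.symm.trans hql)
    refine Or.inl ⟨A, i₁, i₂, r₂, hr₂, hpl, hs_eq, ?_⟩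
    omega
  · -- q is both a switch and a sim value: impossible unless noop, but switch≠sim here
    obtain ⟨h1', h2'⟩ := simR_eq_swR (hql.symm.trans hqeq)
    refine absurd ⟨A, i.val, ?_⟩ hq
    rw [hqeq]
    congr 1
    omega
  · -- γ ∘ γ
    obtain ⟨hij, hrr⟩ := simR_inj (hqeq.symm.trans hql)
    have hi : i₃ = i₂ := Fin.ext hij
    subst hi hrr
    exact Or.inr (Or.inr ⟨i₃, r₂, r₃', hr₂, hr₃', (comp G i₃).gt_trans hgt₃ hgt₂,
      hpl, hs_eq⟩)

lemma gtStar_asymm {p q : CFRule T} (h1 : gtStar G p q) (h2 : gtStar G q p) : False := by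
  obtain ⟨hq, h1⟩ := h1
  obtain ⟨hp, h2⟩ := h2
  rcases h1 with ⟨A, i₁, j, r, hr, hpl, hqeq, hne⟩ | ⟨B, i, A, j, hB, hpl, hqeq⟩ |
    ⟨i₃, r₃, r₃', hr₃, hr₃', hgt₃, hpl, hqeq⟩
  · exact hp ⟨A, i₁, hpl⟩
  · exact hp ⟨B, i.val, hpl⟩
  rcases h2 with ⟨A, i₁, j, r, hr, hql, -, -⟩ | ⟨B, i, A, j, hB, hql, -⟩ |
    ⟨i₂, r₂, r₂', hr₂, hr₂', hgt₂, hql, hpeq⟩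
  · exact hq ⟨A, i₁, hql⟩
  · exact hq ⟨B, i.val, hql⟩
  · obtain ⟨hij, hrr⟩ := simR_inj (hqeq.symm.trans hql)
    have hi : i₃ = i₂ := Fin.ext hij
    subst hi hrr
    obtain ⟨-, hrr'⟩ := simR_inj (hpeq.symm.trans hpl)
    subst hrr'
    exact (comp G i₃).gt_asymm hgt₃ hgt₂

/-- The simulating ordered grammar (component). -/
def starC : OComponent T where
  rules := rulesStar G
  gt := gtStar G
  gt_trans := fun h1 h2 => gtStar_trans G h1 h2
  gt_asymm := fun h => fun h' => gtStar_asymm G h h'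

/-! #### Soundness -/

lemma singleton_decomp {x z : Word T} {a b : Sym T} (h : x ++ [a] ++ z = [b]) :
    x = [] ∧ a = b ∧ z = [] := by
  have hlen := congrArg List.length h
  simp only [List.length_append, List.length_singleton] at hlen
  have hx : x = [] := List.eq_nil_of_length_eq_zero (by omega)
  have hz : z = [] := List.eq_nil_of_length_eq_zero (by omega)
  subst hx hz
  simp only [List.nil_append, List.append_nil, List.cons.injEq] at h
  exact ⟨rfl, h.1, rfl⟩

lemma noop_rewrite {q : CFRule T} (hq : IsNoop q) {u u₂ : Word T}
    (h : q.Rewrites u u₂) : u₂ = u := by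
  obtain ⟨A, i, rfl⟩ := hq
  obtain ⟨x, z, hu, hu₂⟩ := h
  rw [hu₂, hu]
  rfl

/-- Tagged sentential forms. -/
def Tagged (u : Word T) : Prop :=
  ∀ c, Sum.inl c ∈ u → ∃ A ∈ ntl G, ∃ i : Fin (nn G), c = ee A i.val

/-- Uniformly `i`-tagged sentential forms. -/
def Unif (i : ℕ) (u : Word T) : Prop := ∀ c, Sum.inl c ∈ u → ∃ A, c = ee A i

lemma unif_mem {i : ℕ} {u : Word T} {B : ℕ} (hU : Unif i u)
    (h : Sum.inl B ∈ untagW u) : Sum.inl (ee B i) ∈ u := by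
  obtain ⟨c, hc, hcb⟩ := inl_mem_untagW.mp h
  obtain ⟨A, rfl⟩ := hU c hc
  have : A = B := by simpa [ee, Nat.unpair_pair] using hcb
  subst this
  exact hc

/-- Reachability in the system. -/
def SysReach (v : Word T) : Prop :=
  Relation.ReflTransGen (G.SysStep .t) [Sum.inl G.start] v

/-- The soundness invariant. -/
def Inv (u : Word T) : Prop :=
  u = [Sum.inl 0] ∨ (Tagged G u ∧ (SysReach G (untagW u) ∨
    ∃ i : Fin (nn G), Unif i.val u ∧ ∃ v', SysReach G v' ∧
      Relation.ReflTransGen (comp G i).Step v' (untagW u)))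

lemma inv_step {u u₂ : Word T} (hI : Inv G u) (h : (starC G).Step u u₂) :
    Inv G u₂ := by
  obtain ⟨q, hqmem, hrw, hguard⟩ := h
  rcases hI with rfl | ⟨hT, hcases⟩
  · -- initial configuration
    obtain ⟨x, z, hu, hu₂⟩ := hrw
    obtain ⟨hx, ha, hz⟩ := singleton_decomp hu.symm
    have hlhs : q.lhs = 0 := by simpa using ha
    rcases (mem_rulesStar G).mp hqmem with ⟨i, hi, rfl⟩ | ⟨i, r, hr, rfl⟩ |
      ⟨A, hA, i, j, rfl⟩
    · subst hx hz
      simp only [List.nil_append, List.append_nil] at hu₂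
      refine Or.inr ⟨?_, Or.inr ⟨⟨i, hi⟩, ?_, [Sum.inl G.start], .refl, ?_⟩⟩
      · intro c hc
        rw [hu₂] at hc
        simp only [initR, List.mem_singleton, Sum.inl.injEq] at hc
        exact ⟨G.start, start_mem_ntl G, ⟨i, hi⟩, hc⟩
      · intro c hc
        rw [hu₂] at hc
        simp only [initR, List.mem_singleton, Sum.inl.injEq] at hc
        exact ⟨G.start, hc⟩
      · rw [hu₂]
        have : untagW (T := T) [Sum.inl (ee G.start i)] = [Sum.inl G.start] := by
          simp [untagW, untagS_ee]
        rw [show (initR G i).rhs = [Sum.inl (ee G.start i)] from rfl, this]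
    · exact absurd hlhs (ee_ne_zero r.lhs i.val)
    · exact absurd hlhs (ee_ne_zero A i.val)
  · -- tagged configuration
    by_cases hNoop : IsNoop q
    · rw [noop_rewrite hNoop hrw]
      exact Or.inr ⟨hT, hcases⟩
    rcases (mem_rulesStar G).mp hqmem with ⟨i, hi, rfl⟩ | ⟨i, r, hr, rfl⟩ |
      ⟨A, hA, i, j, rfl⟩
    · -- the initial rule cannot apply to a tagged form
      obtain ⟨x, z, hu, -⟩ := hrw
      have : Sum.inl (0 : ℕ) ∈ u := by rw [hu]; simp [initR]
      obtain ⟨A, -, k, hk⟩ := hT 0 this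
      exact absurd hk.symm (ee_ne_zero A k.val)
    · -- a simulation rule
      have hunif : Unif i.val u := by
        intro c hc
        obtain ⟨A, hA, j, rfl⟩ := hT c hc
        by_cases hij : j = i
        · subst hij; exact ⟨A, rfl⟩
        · exfalso
          refine hguard (swR A j.val j.val) ((mem_rulesStar G).mpr
            (Or.inr (Or.inr ⟨A, hA, j, j, rfl⟩))) ⟨hNoop, Or.inl
              ⟨A, j.val, i, r, hr, rfl, rfl, fun hv => hij (Fin.ext hv)⟩⟩ hc
      obtain ⟨x, z, hu, hu₂⟩ := hrw
      have hv : untagW u = untagW x ++ [Sum.inl r.lhs] ++ untagW z := by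
        rw [hu]
        show untagW (x ++ [Sum.inl (ee r.lhs i.val)] ++ z) = _
        rw [untagW_append, untagW_append]
        simp [untagW, untagS_ee]
      have hv₂ : untagW u₂ = untagW x ++ r.rhs ++ untagW z := by
        rw [hu₂]
        show untagW (x ++ tagW i.val r.rhs ++ z) = _
        rw [untagW_append, untagW_append, untagW_tagW]
      have hstep : (comp G i).Step (untagW u) (untagW u₂) := by
        refine ⟨r, hr, ⟨untagW x, untagW z, hv, hv₂⟩, ?_⟩
        intro r' hr' hgt hocc
        refine hguard (simR i.val r') ((mem_rulesStar G).mpr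
          (Or.inr (Or.inl ⟨i, r', hr', rfl⟩)))
          ⟨hNoop, Or.inr (Or.inr ⟨i, r, r', hr, hr', hgt, rfl, rfl⟩)⟩ ?_
        exact unif_mem hunif hocc
      have hmem₂ : ∀ c, Sum.inl c ∈ u₂ →
          Sum.inl c ∈ u ∨ ∃ A, Sum.inl A ∈ r.rhs ∧ c = ee A i.val := by
        intro c hc
        rw [hu₂] at hc
        rw [hu]
        rcases List.mem_append.mp hc with hc' | hc'
        · rcases List.mem_append.mp hc' with hc'' | hc''
          · exact Or.inl (List.mem_append.mpr (Or.inl (List.mem_append.mpr (Or.inl hc''))))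
          · have hc3 : Sum.inl c ∈ tagW i.val r.rhs := hc''
            exact Or.inr (inl_mem_tagW.mp hc3)
        · exact Or.inl (List.mem_append.mpr (Or.inr hc'))
      have hT₂ : Tagged G u₂ := by
        intro c hc
        rcases hmem₂ c hc with hc' | ⟨A, hA, rfl⟩
        · exact hT c hc'
        · exact ⟨A, rhs_mem_ntl G (comp_mem G i) hr hA, i, rfl⟩
      have hU₂ : Unif i.val u₂ := by
        intro c hc
        rcases hmem₂ c hc with hc' | ⟨A, hA, rfl⟩
        · exact hunif c hc'
        · exact ⟨A, rfl⟩
      rcases hcases with hsr | ⟨i', hU', v', hsr', hrtg⟩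
      · exact Or.inr ⟨hT₂, Or.inr ⟨i, hU₂, untagW u, hsr, .single hstep⟩⟩
      · have hii : i' = i := by
          have hocc : Sum.inl (ee r.lhs i.val) ∈ u := by rw [hu]; simp [simR]
          obtain ⟨A, hA⟩ := hU' _ hocc
          exact Fin.ext (ee_inj hA).2.symm
        subst hii
        exact Or.inr ⟨hT₂, Or.inr ⟨i', hU₂, v', hsr', hrtg.tail hstep⟩⟩
    · -- a switch rule
      obtain ⟨x, z, hu, hu₂⟩ := hrw
      have huntag : untagW u₂ = untagW u := by
        rw [hu, hu₂]
        show untagW (x ++ [Sum.inl (ee A j.val)] ++ z) =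
          untagW (x ++ [Sum.inl (ee A i.val)] ++ z)
        rw [untagW_append, untagW_append, untagW_append, untagW_append]
        simp [untagW, untagS_ee]
      have hT₂ : Tagged G u₂ := by
        intro c hc
        rw [hu₂] at hc
        rcases List.mem_append.mp hc with hc' | hc'
        · rcases List.mem_append.mp hc' with hc'' | hc''
          · refine hT c ?_
            rw [hu]
            exact List.mem_append.mpr (Or.inl (List.mem_append.mpr (Or.inl hc'')))
          · have hcj : c = ee A j.val := by simpa [swR] using hc''
            exact ⟨A, hA, j, hcj⟩
        · refine hT c ?_
          rw [hu]
          exact List.mem_append.mpr (Or.inr hc')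
      have hnolhs : ∀ r ∈ (comp G i).rules, Sum.inl (ee r.lhs i.val) ∉ u := by
        intro r hr
        refine hguard (swR r.lhs i.val i.val) ((mem_rulesStar G).mpr
          (Or.inr (Or.inr ⟨r.lhs, lhs_mem_ntl G (comp_mem G i) hr, i, i, rfl⟩)))
          ⟨hNoop, Or.inr (Or.inl ⟨r.lhs, i, A, j.val,
            List.mem_map.mpr ⟨r, hr, rfl⟩, rfl, rfl⟩)⟩
      rcases hcases with hsr | ⟨i', hU', v', hsr', hrtg⟩
      · exact Or.inr ⟨hT₂, Or.inl (huntag ▸ hsr)⟩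
      · have hii : i' = i := by
          have hocc : Sum.inl (ee A i.val) ∈ u := by rw [hu]; simp [swR]
          obtain ⟨B, hB⟩ := hU' _ hocc
          exact Fin.ext (ee_inj hB).2.symm
        subst hii
        have hdead : ∀ w, ¬ (comp G i').Step (untagW u) w :=
          (dead_iff_no_lhs _ _).mpr
            (fun r hr hocc => hnolhs r hr (unif_mem hU' hocc))
        have hsys : G.SysStep .t v' (untagW u) :=
          ⟨comp G i', comp_mem G i', hrtg, hdead⟩
        exact Or.inr ⟨hT₂, Or.inl (huntag ▸ hsr'.tail hsys)⟩

lemma inv_reach {u : Word T}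
    (h : Relation.ReflTransGen (starC G).Step [Sum.inl 0] u) : Inv G u := by
  induction h with
  | refl => exact Or.inl rfl
  | tail _ hstep ih => exact inv_step G ih hstep

/-! #### Completeness -/

/-- All nonterminals of a sentential form belong to `ntl`. -/
def NTok (v : Word T) : Prop := ∀ B, Sum.inl B ∈ v → B ∈ ntl G

lemma ntok_step {C : OComponent T} (hC : C ∈ G.comps) {v v₂ : Word T}
    (h : C.Step v v₂) (hN : NTok G v) : NTok G v₂ := by
  obtain ⟨r, hr, ⟨x, z, rfl, rfl⟩, -⟩ := h
  intro B hB
  rcases List.mem_append.mp hB with hB' | hB'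
  · rcases List.mem_append.mp hB' with hB'' | hB''
    · exact hN B (List.mem_append.mpr (Or.inl (List.mem_append.mpr (Or.inl hB''))))
    · exact rhs_mem_ntl G hC hr hB''
  · exact hN B (List.mem_append.mpr (Or.inr hB'))

lemma ntok_rtg {C : OComponent T} (hC : C ∈ G.comps) {v v₂ : Word T}
    (h : Relation.ReflTransGen C.Step v v₂) (hN : NTok G v) : NTok G v₂ := by
  induction h with
  | refl => exact hN
  | tail _ hstep ih => exact ntok_step G hC hstep ih

lemma ntok_sysreach {v : Word T} (h : SysReach G v) : NTok G v := by
  induction h with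
  | refl =>
    intro B hB
    simp only [List.mem_singleton, Sum.inl.injEq] at hB
    exact hB ▸ start_mem_ntl G
  | tail _ hstep ih =>
    obtain ⟨C, hC, hrtg, -⟩ := hstep
    exact ntok_rtg G hC hrtg ih

lemma star_init (i : Fin (nn G)) :
    (starC G).Step [Sum.inl 0] [Sum.inl (ee G.start i.val)] := by
  refine ⟨initR G i.val, (mem_rulesStar G).mpr (Or.inl ⟨i.val, i.isLt, rfl⟩),
    ⟨[], [], rfl, rfl⟩, ?_⟩
  intro p hpmem hgt
  obtain ⟨hq, hcase⟩ := hgt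
  exfalso
  rcases hcase with ⟨A, i₁, j, r, hr, hpl, hqeq, hne⟩ | ⟨B, k, A, j, hB, hpl, hqeq⟩ |
    ⟨k, r, r', hr, hr', hgtk, hpl, hqeq⟩
  · exact initR_ne_simR G hqeq
  · exact initR_ne_swR G hqeq
  · exact initR_ne_simR G hqeq

lemma star_sim (i : Fin (nn G)) {v v₂ : Word T} (h : (comp G i).Step v v₂) :
    (starC G).Step (tagW i.val v) (tagW i.val v₂) := by
  obtain ⟨r, hr, ⟨x, z, rfl, rfl⟩, hg⟩ := h
  refine ⟨simR i.val r, (mem_rulesStar G).mpr (Or.inr (Or.inl ⟨i, r, hr, rfl⟩)),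
    ⟨tagW i.val x, tagW i.val z, ?_, ?_⟩, ?_⟩
  · rw [tagW_append, tagW_append]
    rfl
  · rw [tagW_append, tagW_append]
    rfl
  · intro p hpmem hgt
    obtain ⟨hnq, hcase⟩ := hgt
    rcases hcase with ⟨A, i₁, j, r₀, hr₀, hpl, hqeq, hne⟩ | ⟨B, k, A, j, hB, hpl, hqeq⟩ |
      ⟨k, r₀, r', hr₀, hr', hgtk, hpl, hqeq⟩
    · -- foreign no-op blocker: its tag differs from i
      obtain ⟨hj, -⟩ := simR_inj hqeq
      subst hpl
      intro hocc
      have hocc' : Sum.inl (ee A i₁) ∈ tagW i.val (x ++ [Sum.inl r.lhs] ++ z) := hocc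
      obtain ⟨B, -, hB⟩ := inl_mem_tagW.mp hocc'
      exact hne (((ee_inj hB).2).trans hj)
    · -- `q` would be a no-op
      obtain ⟨h1, h2⟩ := simR_eq_swR hqeq
      refine absurd ⟨A, k.val, ?_⟩ hnq
      rw [hqeq]
      congr 1
      omega
    · -- within-component blocker
      obtain ⟨hk, hreq⟩ := simR_inj hqeq
      subst hreq hpl
      intro hocc
      have hocc' : Sum.inl (ee r'.lhs k.val) ∈ tagW i.val (x ++ [Sum.inl r.lhs] ++ z) :=
        hocc
      obtain ⟨B, hBmem, hB⟩ := inl_mem_tagW.mp hocc'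
      obtain ⟨hBl, -⟩ := ee_inj hB
      have hik : k = i := Fin.ext hk.symm
      subst hik hBl
      exact hg r' hr' hgtk hBmem

lemma star_sim_rtg (i : Fin (nn G)) {v v₂ : Word T}
    (h : Relation.ReflTransGen (comp G i).Step v v₂) :
    Relation.ReflTransGen (starC G).Step (tagW i.val v) (tagW i.val v₂) := by
  induction h with
  | refl => exact .refl
  | tail _ hstep ih => exact ih.tail (star_sim G i hstep)

lemma star_retag_aux (i j : Fin (nn G)) {v : Word T} (hN : NTok G v)
    (hdead : ∀ r ∈ (comp G i).rules, Sum.inl r.lhs ∉ v) :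
    ∀ v₂ v₁, v = v₁ ++ v₂ →
      Relation.ReflTransGen (starC G).Step
        (tagW j.val v₁ ++ tagW i.val v₂) (tagW j.val (v₁ ++ v₂)) := by
  intro v₂
  induction v₂ with
  | nil =>
    intro v₁ hv
    simp only [tagW, List.map_nil, List.append_nil]
    exact .refl
  | cons s v₂ ih =>
    intro v₁ hv
    cases s with
    | inr t =>
      have heq : tagW (T := T) j.val v₁ ++ tagW i.val (Sum.inr t :: v₂) =
          tagW j.val (v₁ ++ [Sum.inr t]) ++ tagW i.val v₂ := by
        rw [tagW_append]
        simp [tagW, tagS]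
      rw [heq]
      have := ih (v₁ ++ [Sum.inr t]) (by rw [hv]; simp)
      simpa using this
    | inl A =>
      have hA : A ∈ ntl G := hN A (by rw [hv]; simp)
      have hstep : (starC G).Step
          (tagW j.val v₁ ++ tagW i.val (Sum.inl A :: v₂))
          (tagW j.val (v₁ ++ [Sum.inl A]) ++ tagW i.val v₂) := by
        refine ⟨swR A i.val j.val, (mem_rulesStar G).mpr
          (Or.inr (Or.inr ⟨A, hA, i, j, rfl⟩)),
          ⟨tagW j.val v₁, tagW i.val v₂, ?_, ?_⟩, ?_⟩
        · show _ = tagW j.val v₁ ++ [Sum.inl (ee A i.val)] ++ tagW i.val v₂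
          simp [tagW, tagS]
        · show _ = tagW j.val v₁ ++ [Sum.inl (ee A j.val)] ++ tagW i.val v₂
          rw [tagW_append]
          simp [tagW, tagS]
        · intro p hpmem hgt
          obtain ⟨hnq, hcase⟩ := hgt
          rcases hcase with ⟨A₁, i₁, j₁, r₁, hr₁, hpl, hqeq, hne⟩ |
            ⟨B, k, A₁, j₁, hB, hpl, hqeq⟩ | ⟨k, r₀, r', hr₀, hr', hgtk, hpl, hqeq⟩
          · -- `q` is both switch and sim: forces a no-op
            obtain ⟨h1, h2⟩ := simR_eq_swR hqeq.symm
            exfalso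
            refine hnq ⟨A, i.val, ?_⟩
            congr 1
            omega
          · -- a genuine blocker: some lhs of component `i` would occur
            obtain ⟨rfl, hki, -⟩ := swR_inj hqeq
            subst hpl
            intro hocc
            have hBv : Sum.inl B ∈ v := by
              rcases List.mem_append.mp hocc with h' | h'
              · obtain ⟨B', hB', hBe⟩ := inl_mem_tagW.mp h'
                obtain ⟨rfl, hje⟩ := ee_inj hBe
                rw [hv]
                exact List.mem_append.mpr (Or.inl hB')
              · obtain ⟨B', hB', hBe⟩ := inl_mem_tagW.mp h'
                obtain ⟨rfl, -⟩ := ee_inj hBe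
                rw [hv]
                exact List.mem_append.mpr (Or.inr hB')
            obtain ⟨r₀, hr₀, hlhs⟩ := List.mem_map.mp hB
            have hik : k = i := Fin.ext hki.symm
            rw [hik] at hr₀
            exact hdead r₀ hr₀ (hlhs ▸ hBv)
          · -- `q` is both switch and sim: forces a no-op
            obtain ⟨h1, h2⟩ := simR_eq_swR hqeq.symm
            exfalso
            refine hnq ⟨A, i.val, ?_⟩
            congr 1
            omega
      have := ih (v₁ ++ [Sum.inl A]) (by rw [hv]; simp)
      refine Relation.ReflTransGen.head hstep ?_
      simpa using this

lemma star_retag (i j : Fin (nn G)) {v : Word T} (hN : NTok G v)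
    (hdead : ∀ r ∈ (comp G i).rules, Sum.inl r.lhs ∉ v) :
    Relation.ReflTransGen (starC G).Step (tagW i.val v) (tagW j.val v) := by
  have := star_retag_aux G i j hN hdead v [] rfl
  simpa [tagW] using this

lemma sysreach_star {v : Word T} (h : SysReach G v) :
    v = [Sum.inl G.start] ∨ ∃ i : Fin (nn G),
      (∀ r ∈ (comp G i).rules, Sum.inl r.lhs ∉ v) ∧
      Relation.ReflTransGen (starC G).Step [Sum.inl 0] (tagW i.val v) := by
  induction h with
  | refl => exact Or.inl rfl
  | @tail b c hprev hstep ih =>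
    obtain ⟨C, hC, hrtg, hdead⟩ := hstep
    obtain ⟨j, hj⟩ := List.get_of_mem hC
    have hjC : comp G j = C := hj
    subst hjC
    have hNb : NTok G b := ntok_sysreach G hprev
    have hstart : Relation.ReflTransGen (starC G).Step [Sum.inl 0]
        (tagW j.val b) := by
      rcases ih with rfl | ⟨i, hdi, hreach⟩
      · exact .single (star_init G j)
      · exact hreach.trans (star_retag G i j hNb hdi)
    have hsim := star_sim_rtg G j hrtg
    exact Or.inr ⟨j, (dead_iff_no_lhs _ _).mp hdead, hstart.trans hsim⟩

/-! #### The language equality -/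

lemma lang_star_eq : G.lang .t = langOf (starC G).Step 0 := by
  ext w
  simp only [OCDGS.lang, langOf, Set.mem_setOf_eq]
  constructor
  · intro h
    rcases sysreach_star G h with heq | ⟨i, -, hreach⟩
    · exfalso
      have : Sum.inl G.start ∈ encodeWord (T := T) w := by rw [heq]; simp
      simp [encodeWord] at this
    · rwa [tagW_encode] at hreach
  · intro h
    have hI := inv_reach G h
    rcases hI with heq | ⟨-, hcases⟩
    · exfalso
      have : Sum.inl (0 : ℕ) ∈ encodeWord (T := T) w := by rw [heq]; simp
      simp [encodeWord] at this
    · rw [untagW_encode] at hcases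
      rcases hcases with hsr | ⟨i, -, v', hsr', hrtg⟩
      · exact hsr
      · have hdead : ∀ w', ¬ (comp G i).Step (encodeWord w) w' := by
          refine (dead_iff_no_lhs _ _).mpr ?_
          intro r hr hocc
          simp [encodeWord] at hocc
        exact hsr'.tail ⟨comp G i, comp_mem G i, hrtg, hdead⟩

lemma star_nonErasing (h : G.NonErasing) : (starC G).NonErasing := by
  intro r hr
  rcases (mem_rulesStar G).mp hr with ⟨i, hi, rfl⟩ | ⟨i, r₀, hr₀, rfl⟩ |
    ⟨A, hA, i, j, rfl⟩
  · simp [CFRule.Erasing, initR]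
  · have := h (comp G i) (comp_mem G i) r₀ hr₀
    simp only [CFRule.Erasing, simR, tagW] at *
    intro hcon
    exact this (List.map_eq_nil_iff.mp hcon)
  · simp [CFRule.Erasing, swR]

/-! #### The easy inclusion: `ORD ⊆ OCD(t)` -/

lemma single_lang (C : OComponent T) (S : ℕ) :
    (OCDGS.mk [C] S).lang .t = langOf C.Step S := by
  ext w
  simp only [OCDGS.lang, langOf, Set.mem_setOf_eq]
  constructor
  · intro h
    have key : ∀ u, Relation.ReflTransGen ((OCDGS.mk [C] S).SysStep .t) [Sum.inl S] u →
        Relation.ReflTransGen C.Step [Sum.inl S] u := by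
      intro u hu
      induction hu with
      | refl => exact .refl
      | tail _ hstep ih =>
        obtain ⟨C', hC', hmode⟩ := hstep
        simp only [List.mem_singleton] at hC'
        subst hC'
        exact ih.trans hmode.1
    exact key _ h
  · intro h
    have hdead : ∀ w', ¬ C.Step (encodeWord w) w' := by
      rintro w' ⟨r, hr, ⟨x, z, hx, -⟩, -⟩
      have : Sum.inl r.lhs ∈ encodeWord (T := T) w := by rw [hx]; simp
      simp [encodeWord] at this
    exact .single ⟨C, List.mem_singleton_self C, h, hdead⟩

end OCDtoORD

/-- `OCD(t) = ORD` and `OCD^{-λ}(t) = ORD^{-λ}`. -/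
theorem OCD_t_eq_ORD (T : Type) [Fintype T] :
    OCD T .t = ORD T ∧ OCDne T .t = ORDne T := by
  constructor
  · ext L
    simp only [OCD, ORD, Set.mem_setOf_eq]
    constructor
    · rintro ⟨G, rfl⟩
      exact ⟨OCDtoORD.starC G, 0, OCDtoORD.lang_star_eq G⟩
    · rintro ⟨C, S, rfl⟩
      exact ⟨⟨[C], S⟩, (OCDtoORD.single_lang C S).symm⟩
  · ext L
    simp only [OCDne, ORDne, Set.mem_setOf_eq]
    constructor
    · rintro ⟨G, hne, rfl⟩
      exact ⟨OCDtoORD.starC G, 0, OCDtoORD.star_nonErasing G hne,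
        OCDtoORD.lang_star_eq G⟩
    · rintro ⟨C, S, hne, rfl⟩
      refine ⟨⟨[C], S⟩, ?_, (OCDtoORD.single_lang C S).symm⟩
      intro C' hC'
      simp only [List.mem_singleton] at hC'
      exact hC' ▸ hne
end

section
/- For every mode m ∈ {=k, ≤k, ≥k : k ≥ 1} ∪ {*}, the class of languages generated by forbidden random context cooperating distributed grammar systems in mode m equals the class of languages generated by ordered cooperating distributed grammar systems in mode m, both when erasing productions are allowed and when they are disallowed: fRCCD(m) = OCD(m) and fRCCD^{-λ}(m) = OCD^{-λ}(m). -/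
namespace FRCSim

open GrammarSystems List

/-! ### Generic lemmas -/

lemma iter_snoc {α : Type*} {r : α → α → Prop} :
    ∀ {n : ℕ} {u v w : α}, iter r n u v → r v w → iter r (n + 1) u w
  | 0, u, v, w, h, h2 => by
      have h' : u = v := h
      subst h'
      exact ⟨w, h2, rfl⟩
  | n+1, u, v, w, h, h2 => by
      obtain ⟨a, ha, h'⟩ := h
      exact ⟨a, ha, iter_snoc h' h2⟩

lemma rtg_iff_iter {α : Type*} {r : α → α → Prop} {u v : α} :
    Relation.ReflTransGen r u v ↔ ∃ n, iter r n u v := by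
  constructor
  · intro h
    induction h with
    | refl => exact ⟨0, rfl⟩
    | tail _ h2 ih => obtain ⟨n, hn⟩ := ih; exact ⟨n + 1, iter_snoc hn h2⟩
  · rintro ⟨n, hn⟩
    induction n generalizing u with
    | zero => exact (show u = v from hn) ▸ .refl
    | succ n ih => obtain ⟨w, hw, h'⟩ := hn; exact (ih h').head hw

lemma iter_preserve {α : Type*} {r : α → α → Prop} {p : α → Prop}
    (hp : ∀ a b, r a b → p a → p b) :
    ∀ {n : ℕ} {u v : α}, iter r n u v → p u → p v
  | 0, u, v, h, hu => (show u = v from h) ▸ hu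
  | n+1, u, v, h, hu => by
      obtain ⟨w, hw, h'⟩ := h
      exact iter_preserve hp h' (hp _ _ hw hu)

lemma forall₂_split {α β : Type*} {R : α → β → Prop} :
    ∀ {a b : List α} {c : List β}, Forall₂ R (a ++ b) c →
      ∃ c₁ c₂, c = c₁ ++ c₂ ∧ Forall₂ R a c₁ ∧ Forall₂ R b c₂ := by
  intro a
  induction a with
  | nil => exact fun h => ⟨[], _, rfl, .nil, h⟩
  | cons s a ih =>
      intro b c h
      cases h with
      | cons h1 h2 =>
        obtain ⟨c₁, c₂, rfl, hx, hy⟩ := ih h2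
        exact ⟨_ :: c₁, c₂, rfl, .cons h1 hx, hy⟩

lemma forall₂_mem_right {α β : Type*} {R : α → β → Prop} :
    ∀ {l : List α} {l' : List β}, Forall₂ R l l' → ∀ {b}, b ∈ l' → ∃ a ∈ l, R a b := by
  intro l l' h
  induction h with
  | nil => intro b hb; simp at hb
  | cons h1 _ ih =>
      intro b hb
      rcases List.mem_cons.mp hb with rfl | hb
      · exact ⟨_, List.mem_cons_self, h1⟩
      · obtain ⟨a, ha, hr⟩ := ih hb
        exact ⟨a, List.mem_cons_of_mem _ ha, hr⟩

lemma modeRel_congr {α : Type*} {r r' : α → α → Prop} (h : ∀ a b, r a b ↔ r' a b) (m : Mode) :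
    ModeRel r m = ModeRel r' m := by
  obtain rfl : r = r' := funext fun a => funext fun b => propext (h a b)
  rfl

/-! ### The simulation of an fRCCDGS by an OCDGS -/

variable {T : Type} (G : FRCCDGS T)

/-- All rules of the system, globally indexed. -/
def all : List (FRCRule T) := G.comps.flatten

/-- The number of global rule indices (colors). -/
def RR : ℕ := (all G).length

/-- Encoding of the colored nonterminal `A` with color `i`. -/
def enc (A i : ℕ) : ℕ := 2 * Nat.pair A i + 2 * G.start + 2

/-- The trap nonterminal. -/
def fl : ℕ := 2 * G.start + 1

/-- Decoding of nonterminals. -/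
def dec (n : ℕ) : ℕ :=
  if n = G.start then G.start else (Nat.unpair ((n - (2 * G.start + 2)) / 2)).1

lemma enc_ne_start (A i : ℕ) : enc G A i ≠ G.start := by unfold enc; omega

lemma enc_ne_fl (A i : ℕ) : enc G A i ≠ fl G := by unfold enc fl; omega

lemma fl_ne_start : fl G ≠ G.start := by unfold fl; omega

lemma enc_inj {A i B j : ℕ} (h : enc G A i = enc G B j) : A = B ∧ i = j := by
  unfold enc at h
  have h' : Nat.pair A i = Nat.pair B j := by omega
  exact Nat.pair_eq_pair.mp h'

lemma dec_enc (A i : ℕ) : dec G (enc G A i) = A := by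
  unfold dec
  rw [if_neg (enc_ne_start G A i)]
  unfold enc
  have h : 2 * Nat.pair A i + 2 * G.start + 2 - (2 * G.start + 2) = 2 * Nat.pair A i := by omega
  rw [h, Nat.mul_div_cancel_left _ (by norm_num), Nat.unpair_pair]

lemma dec_start : dec G G.start = G.start := if_pos rfl

/-- Relating a symbol to a colored version of it. -/
def ColSym (s s' : Sym T) : Prop :=
  (∃ A i, i < RR G ∧ s = Sum.inl A ∧ s' = Sum.inl (enc G A i)) ∨
    ∃ t : T, s = Sum.inr t ∧ s' = Sum.inr t

/-- Relating a word to a colored version of it. -/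
def Col (u u' : Word T) : Prop := Forall₂ (ColSym G) u u'

/-- All colorings of a symbol. -/
def symColors : Sym T → List (Sym T)
  | Sum.inl A => (List.range (RR G)).map fun i => Sum.inl (enc G A i)
  | Sum.inr t => [Sum.inr t]

lemma mem_symColors {s s' : Sym T} : s' ∈ symColors G s ↔ ColSym G s s' := by
  cases s with
  | inl A =>
      simp only [symColors, List.mem_map, List.mem_range, ColSym]
      constructor
      · rintro ⟨i, hi, rfl⟩; exact Or.inl ⟨A, i, hi, rfl, rfl⟩
      · rintro (⟨A', i, hi, hA, rfl⟩ | ⟨t, h, -⟩)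
        · obtain rfl : A = A' := Sum.inl.inj hA
          exact ⟨i, hi, rfl⟩
        · cases h
  | inr t =>
      simp only [symColors, List.mem_singleton, ColSym]
      constructor
      · rintro rfl; exact Or.inr ⟨t, rfl, rfl⟩
      · rintro (⟨A', i, hi, h, -⟩ | ⟨t', ht, rfl⟩)
        · cases h
        · cases ht; rfl

/-- All colorings of a word. -/
def colorings : Word T → List (Word T)
  | [] => [[]]
  | s :: y => (symColors G s).flatMap fun s' => (colorings y).map (s' :: ·)

lemma mem_colorings : ∀ {y y' : Word T}, y' ∈ colorings G y ↔ Col G y y' := by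
  intro y
  induction y with
  | nil =>
      intro y'
      simp only [colorings, List.mem_singleton, Col]
      constructor
      · rintro rfl; exact .nil
      · intro h; exact (List.forall₂_nil_left_iff.mp h)
  | cons s y ih =>
      intro y'
      simp only [colorings, List.mem_flatMap, List.mem_map, Col]
      constructor
      · rintro ⟨s', hs', t', ht', rfl⟩
        exact .cons ((mem_symColors G).mp hs') ((ih).mp ht')
      · intro h
        cases h with
        | cons h1 h2 => exact ⟨_, (mem_symColors G).mpr h1, _, ih.mpr h2, rfl⟩

/-- The erasing (decoding) map back to the original sentential forms. -/
def er (u : Word T) : Word T := u.map (Sum.map (dec G) id)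

lemma er_append (u v : Word T) : er G (u ++ v) = er G u ++ er G v := List.map_append

lemma er_col : ∀ {y y' : Word T}, Col G y y' → er G y' = y := by
  intro y y' h
  induction h with
  | nil => rfl
  | @cons a b l l' h1 _ ih =>
      rcases h1 with ⟨A, i, hi, rfl, rfl⟩ | ⟨t, rfl, rfl⟩
      · simp only [er, List.map_cons, Sum.map_inl, dec_enc] at ih ⊢
        rw [ih]
      · simp only [er, List.map_cons, Sum.map_inr, id] at ih ⊢
        rw [ih]

lemma er_start : er G [Sum.inl G.start] = [Sum.inl G.start] := by
  simp [er, dec_start]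

lemma er_encode (w : List T) : er G (encodeWord w) = encodeWord w := by
  simp [er, encodeWord, List.map_map, Function.comp]

lemma col_encode (w : List T) : Col G (encodeWord w) (encodeWord w) := by
  induction w with
  | nil => exact .nil
  | cons t w ih => exact .cons (Or.inr ⟨t, rfl, rfl⟩) ih

lemma start_ne_encode (w : List T) : ([Sum.inl G.start] : Word T) = encodeWord w → False := by
  cases w <;> simp [encodeWord]

/-! ### The ordered components -/

open Classical in
/-- Colored variants of the rule with global index `i`, for a component `P`. -/
noncomputable def mainsAt (P : List (FRCRule T)) (i : ℕ) : List (CFRule T) :=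
  ((all G)[i]?).elim [] fun r =>
    if r ∈ P then (colorings G r.rhs).map (fun y' => ⟨enc G r.lhs i, y'⟩) else []

noncomputable def mains (P : List (FRCRule T)) : List (CFRule T) :=
  (List.range (RR G)).flatMap (mainsAt G P)

lemma mem_mains {P : List (FRCRule T)} {q : CFRule T} :
    q ∈ mains G P ↔ ∃ i r, (all G)[i]? = some r ∧ r ∈ P ∧
      ∃ y', Col G r.rhs y' ∧ q = ⟨enc G r.lhs i, y'⟩ := by
  constructor
  · intro hq
    obtain ⟨i, _, hq⟩ := List.mem_flatMap.mp hq
    unfold mainsAt at hq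
    rcases h : (all G)[i]? with _ | r
    · rw [h] at hq; simp at hq
    · rw [h] at hq
      simp only [Option.elim_some] at hq
      by_cases hrP : r ∈ P
      · rw [if_pos hrP] at hq
        obtain ⟨y', hy', rfl⟩ := List.mem_map.mp hq
        exact ⟨i, r, h, hrP, y', (mem_colorings G).mp hy', rfl⟩
      · rw [if_neg hrP] at hq; simp at hq
  · rintro ⟨i, r, h, hrP, y', hy', rfl⟩
    refine List.mem_flatMap.mpr ⟨i, List.mem_range.mpr (List.getElem?_eq_some_iff.mp h).1, ?_⟩
    unfold mainsAt
    rw [h]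
    simp only [Option.elim_some]
    rw [if_pos hrP]
    exact List.mem_map.mpr ⟨y', (mem_colorings G).mpr hy', rfl⟩

/-- Variants of start rules, applicable to the raw start symbol. -/
noncomputable def sVars (P : List (FRCRule T)) : List (CFRule T) :=
  P.flatMap fun r =>
    if r.lhs = G.start ∧ G.start ∉ r.forb then
      (colorings G r.rhs).map (fun y' => ⟨G.start, y'⟩) else []

lemma mem_sVars {P : List (FRCRule T)} {q : CFRule T} :
    q ∈ sVars G P ↔ ∃ r ∈ P, r.lhs = G.start ∧ G.start ∉ r.forb ∧
      ∃ y', Col G r.rhs y' ∧ q = ⟨G.start, y'⟩ := by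
  constructor
  · intro hq
    obtain ⟨r, hr, hq⟩ := List.mem_flatMap.mp hq
    by_cases hcond : r.lhs = G.start ∧ G.start ∉ r.forb
    · rw [if_pos hcond] at hq
      obtain ⟨y', hy', rfl⟩ := List.mem_map.mp hq
      exact ⟨r, hr, hcond.1, hcond.2, y', (mem_colorings G).mp hy', rfl⟩
    · rw [if_neg hcond] at hq; simp at hq
  · rintro ⟨r, hr, h1, h2, y', hy', rfl⟩
    refine List.mem_flatMap.mpr ⟨r, hr, ?_⟩
    rw [if_pos ⟨h1, h2⟩]
    exact List.mem_map.mpr ⟨y', (mem_colorings G).mpr hy', rfl⟩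

/-- Trap rules for forbidden symbols. -/
noncomputable def dums (P : List (FRCRule T)) : List (CFRule T) :=
  (P.flatMap fun r => r.forb.toList).flatMap fun B =>
    (List.range (RR G)).map fun j => ⟨enc G B j, [Sum.inl (fl G)]⟩

lemma mem_dums {P : List (FRCRule T)} {q : CFRule T} :
    q ∈ dums G P ↔ ∃ r ∈ P, ∃ B ∈ r.forb, ∃ j, j < RR G ∧
      q = ⟨enc G B j, [Sum.inl (fl G)]⟩ := by
  simp only [dums, List.mem_flatMap, List.mem_map, List.mem_range, Finset.mem_toList]
  constructor
  · rintro ⟨B, ⟨r, hr, hB⟩, j, hj, rfl⟩; exact ⟨r, hr, B, hB, j, hj, rfl⟩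
  · rintro ⟨r, hr, B, hB, j, hj, rfl⟩; exact ⟨B, ⟨r, hr, hB⟩, j, hj, rfl⟩

/-- The strict order on rules of the simulating ordered components. -/
def gtRel (p q : CFRule T) : Prop :=
  p.rhs = [Sum.inl (fl G)] ∧ q.rhs ≠ [Sum.inl (fl G)] ∧ q.lhs ≠ G.start ∧
    ∃ i r, (all G)[i]? = some r ∧ q.lhs = enc G r.lhs i ∧
      ∃ B ∈ r.forb, ∃ j, p.lhs = enc G B j

/-- The ordered component simulating the forbidden random context component `P`. -/
noncomputable def OComp (P : List (FRCRule T)) : OComponent T where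
  rules := mains G P ++ sVars G P ++ dums G P
  gt := gtRel G
  gt_trans := by rintro p q r ⟨h1, h2, -⟩ ⟨h3, -⟩; exact absurd h3 h2
  gt_asymm := by rintro p q ⟨h1, h2, -⟩; exact fun h => h.2.1 h1

/-- The simulating ordered CD grammar system. -/
noncomputable def toOCD : OCDGS T := ⟨G.comps.map (OComp G), G.start⟩

lemma mem_OComp_rules {P : List (FRCRule T)} {q : CFRule T} :
    q ∈ (OComp G P).rules ↔ q ∈ mains G P ∨ q ∈ sVars G P ∨ q ∈ dums G P := by
  simp [OComp, List.mem_append, or_assoc]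

lemma col_rhs_ne_fl {y y' : Word T} (h : Col G y y') : y' ≠ [Sum.inl (fl G)] := by
  intro hy
  subst hy
  rcases List.forall₂_cons_right_iff.mp h with ⟨s, l, hs, hl, rfl⟩
  rcases hs with ⟨A, i, hi, rfl, hEq⟩ | ⟨t, rfl, hEq⟩
  · exact enc_ne_fl G A i (Sum.inl.inj hEq).symm
  · cases hEq

/-! ### Invariants -/

def allCol (u : Word T) : Prop :=
  ∀ n, Sum.inl n ∈ u → ∃ A i, i < RR G ∧ n = enc G A i

def good (u : Word T) : Prop := u = [Sum.inl G.start] ∨ allCol G u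

def nofail (u : Word T) : Prop := Sum.inl (fl G) ∉ u

lemma allCol_of_col {y y' : Word T} (h : Col G y y') : allCol G y' := by
  intro n hn
  obtain ⟨s, -, hcs⟩ := forall₂_mem_right h hn
  rcases hcs with ⟨A, i, hi, rfl, heq⟩ | ⟨t, rfl, heq⟩
  · exact ⟨A, i, hi, Sum.inl.inj heq⟩
  · cases heq

lemma nofail_encode (w : List T) : nofail G (encodeWord w) := by
  simp [nofail, encodeWord]

lemma single_eq {α : Type*} {x z : List α} {a b : α} (h : x ++ [a] ++ z = [b]) :
    x = [] ∧ z = [] ∧ a = b := by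
  rcases x with _ | ⟨c, x⟩ <;> rcases z with _ | ⟨d, z⟩ <;> simp_all

/-! ### Micro-step simulation lemmas -/

lemma rules_lhs_ne_fl {P : List (FRCRule T)} {q : CFRule T}
    (hq : q ∈ (OComp G P).rules) : q.lhs ≠ fl G := by
  rcases (mem_OComp_rules G).mp hq with h | h | h
  · obtain ⟨i, r, -, -, y', -, rfl⟩ := (mem_mains G).mp h
    exact enc_ne_fl G _ _
  · obtain ⟨r, -, -, -, y', -, rfl⟩ := (mem_sVars G).mp h
    exact fun h => fl_ne_start G h.symm
  · obtain ⟨r, -, B, -, j, -, rfl⟩ := (mem_dums G).mp h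
    exact enc_ne_fl G _ _

lemma microPersist {P : List (FRCRule T)} {u v : Word T}
    (h : (OComp G P).Step u v) (hf : Sum.inl (fl G) ∈ u) : Sum.inl (fl G) ∈ v := by
  obtain ⟨q, hq, ⟨x, z, rfl, rfl⟩, -⟩ := h
  have hne := rules_lhs_ne_fl G hq
  simp only [List.mem_append, List.mem_singleton] at hf ⊢
  rcases hf with (hf | hf) | hf
  · exact Or.inl (Or.inl hf)
  · exact absurd (Sum.inl.inj hf).symm hne
  · exact Or.inr hf

lemma microF {P : List (FRCRule T)} (hP : P ∈ G.comps) {u v v' : Word T}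
    (h : frcStep P u v) (hc : Col G v v') :
    ∃ u', Col G u u' ∧ (OComp G P).Step u' v' := by
  obtain ⟨r, hr, ⟨x, z, rfl, rfl⟩, hforb⟩ := h
  obtain ⟨c₁, z', rfl, hc₁, hz⟩ := forall₂_split hc
  obtain ⟨x', y', rfl, hx, hy⟩ := forall₂_split hc₁
  have hrall : r ∈ all G := List.mem_flatten.mpr ⟨P, hP, hr⟩
  obtain ⟨i, hi⟩ := List.mem_iff_getElem?.mp hrall
  have hiR : i < RR G := (List.getElem?_eq_some_iff.mp hi).1
  have hmid : Forall₂ (ColSym G) [Sum.inl r.lhs] [Sum.inl (enc G r.lhs i)] :=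
    .cons (Or.inl ⟨r.lhs, i, hiR, rfl, rfl⟩) .nil
  refine ⟨x' ++ [Sum.inl (enc G r.lhs i)] ++ z',
    List.rel_append (List.rel_append hx hmid) hz,
    ⟨enc G r.lhs i, y'⟩,
    (mem_OComp_rules G).mpr (Or.inl ((mem_mains G).mpr ⟨i, r, hi, hr, y', hy, rfl⟩)),
    ⟨x', z', rfl, rfl⟩, ?_⟩
  rintro q' hq' ⟨-, hqrhs, -, i₀, r₀, hi₀, hlhs, B, hB, j, hplhs⟩ hmem
  have hlhs' : enc G r.lhs i = enc G r₀.lhs i₀ := hlhs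
  obtain ⟨hAB, rfl⟩ := enc_inj G hlhs'
  have hreq : r₀ = r := Option.some_inj.mp (hi₀.symm.trans hi)
  rw [hreq] at hB
  rw [hplhs] at hmem
  have hnotu : Sum.inl B ∉ x ++ [Sum.inl r.lhs] ++ z := hforb B hB
  simp only [List.mem_append, List.mem_singleton] at hmem hnotu
  rcases hmem with (hm | hm) | hm
  · obtain ⟨s, hs, hcs⟩ := forall₂_mem_right hx hm
    rcases hcs with ⟨A, i', hi', rfl, heq⟩ | ⟨t, rfl, heq⟩
    · obtain ⟨rfl, -⟩ := enc_inj G (Sum.inl.inj heq).symm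
      exact hnotu (Or.inl (Or.inl hs))
    · cases heq
  · obtain ⟨rfl, -⟩ := enc_inj G (Sum.inl.inj hm).symm
    exact hnotu (Or.inl (Or.inr rfl))
  · obtain ⟨s, hs, hcs⟩ := forall₂_mem_right hz hm
    rcases hcs with ⟨A, i', hi', rfl, heq⟩ | ⟨t, rfl, heq⟩
    · obtain ⟨rfl, -⟩ := enc_inj G (Sum.inl.inj heq).symm
      exact hnotu (Or.inr hs)
    · cases heq

lemma microF0 {P : List (FRCRule T)} {v v' : Word T}
    (h : frcStep P [Sum.inl G.start] v) (hc : Col G v v') :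
    (OComp G P).Step [Sum.inl G.start] v' := by
  obtain ⟨r, hr, ⟨x, z, hu, rfl⟩, hforb⟩ := h
  obtain ⟨rfl, rfl, hl⟩ := single_eq hu.symm
  have hlhs : r.lhs = G.start := Sum.inl.inj hl
  have hSforb : G.start ∉ r.forb := by
    intro hS
    exact hforb G.start hS (by simp)
  have hcv : Col G r.rhs v' := by simpa using hc
  refine ⟨⟨G.start, v'⟩,
    (mem_OComp_rules G).mpr (Or.inr (Or.inl ((mem_sVars G).mpr
      ⟨r, hr, hlhs, hSforb, v', hcv, rfl⟩))),
    ⟨[], [], by simp, by simp⟩, ?_⟩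
  rintro q' hq' ⟨-, -, hstart, -⟩ -
  exact hstart rfl

lemma microB {P : List (FRCRule T)} {u v : Word T} (h : (OComp G P).Step u v)
    (hg : good G u) (hnf : nofail G v) :
    good G v ∧ frcStep P (er G u) (er G v) := by
  obtain ⟨q, hq, ⟨x, z, rfl, rfl⟩, hcond⟩ := h
  rcases (mem_OComp_rules G).mp hq with hmain | hsv | hdum
  · -- main rules
    obtain ⟨i, r, hir, hrP, y', hy', rfl⟩ := (mem_mains G).mp hmain
    rcases hg with hstart | hac
    · obtain ⟨-, -, hl⟩ := single_eq hstart
      exact absurd (Sum.inl.inj hl) (enc_ne_start G _ _)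
    · have heru : er G (x ++ [Sum.inl (enc G r.lhs i)] ++ z)
          = er G x ++ [Sum.inl r.lhs] ++ er G z := by
        simp [er_append, er, dec_enc]
      have herv : er G (x ++ y' ++ z) = er G x ++ r.rhs ++ er G z := by
        rw [er_append, er_append, er_col G hy']
      constructor
      · refine Or.inr ?_
        intro n hn
        simp only [List.mem_append] at hn
        rcases hn with (hn | hn) | hn
        · exact hac n (by simp [List.mem_append, hn])
        · exact allCol_of_col G hy' n hn
        · exact hac n (by simp [List.mem_append, hn])
      · refine ⟨r, hrP, ⟨er G x, er G z, heru, herv⟩, ?_⟩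
        intro B hB hmem
        rw [heru] at hmem
        -- find the source symbol of `Sum.inl B`
        have : ∃ j, j < RR G ∧
            Sum.inl (enc G B j) ∈ x ++ [Sum.inl (enc G r.lhs i)] ++ z := by
          simp only [List.mem_append, List.mem_singleton] at hmem
          rcases hmem with (hm | hm) | hm
          · obtain ⟨s, hs, hes⟩ := List.mem_map.mp hm
            rcases s with n | t
            · simp only [Sum.map_inl] at hes
              obtain ⟨A', j, hj, rfl⟩ := hac n (by simp [List.mem_append, hs])
              obtain rfl : A' = B := by
                have := Sum.inl.inj hes
                rwa [dec_enc] at this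
              exact ⟨j, hj, by simp [List.mem_append, hs]⟩
            · simp at hes
          · obtain rfl : r.lhs = B := (Sum.inl.inj hm).symm
            exact ⟨i, (List.getElem?_eq_some_iff.mp hir).1, by simp [List.mem_append]⟩
          · obtain ⟨s, hs, hes⟩ := List.mem_map.mp hm
            rcases s with n | t
            · simp only [Sum.map_inl] at hes
              obtain ⟨A', j, hj, rfl⟩ := hac n (by simp [List.mem_append, hs])
              obtain rfl : A' = B := by
                have := Sum.inl.inj hes
                rwa [dec_enc] at this
              exact ⟨j, hj, by simp [List.mem_append, hs]⟩
            · simp at hes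
        obtain ⟨j, hj, hBj⟩ := this
        have hd : (⟨enc G B j, [Sum.inl (fl G)]⟩ : CFRule T) ∈ (OComp G P).rules :=
          (mem_OComp_rules G).mpr (Or.inr (Or.inr ((mem_dums G).mpr
            ⟨r, hrP, B, hB, j, hj, rfl⟩)))
        have hgt : gtRel G ⟨enc G B j, [Sum.inl (fl G)]⟩ ⟨enc G r.lhs i, y'⟩ :=
          ⟨rfl, col_rhs_ne_fl G hy', enc_ne_start G _ _,
            i, r, hir, rfl, B, hB, j, rfl⟩
        exact hcond _ hd hgt hBj
  · -- start rules
    obtain ⟨r, hr, hlhs, hSforb, y', hy', rfl⟩ := (mem_sVars G).mp hsv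
    rcases hg with hstart | hac
    · obtain ⟨rfl, rfl, -⟩ := single_eq hstart
      have herv : er G ([] ++ y' ++ []) = r.rhs := by
        simp [er_col G hy']
      constructor
      · exact Or.inr (fun n hn => allCol_of_col G hy' n (by simpa using hn))
      · refine ⟨r, hr, ⟨[], [], ?_, ?_⟩, ?_⟩
        · simp [er_start, hlhs]
        · simpa using herv
        · intro B hB hmem
          simp only [er_start, List.nil_append, List.mem_singleton] at hmem
          obtain rfl : B = G.start := by simpa [er_start] using hmem
          exact hSforb hB
    · exfalso
      obtain ⟨A, i, -, hEq⟩ := hac G.start (by simp [List.mem_append])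
      exact enc_ne_start G A i hEq.symm
  · -- trap rules
    obtain ⟨r, hr, B, hB, j, hj, rfl⟩ := (mem_dums G).mp hdum
    exact absurd (by simp [List.mem_append] : Sum.inl (fl G) ∈ x ++ [Sum.inl (fl G)] ++ z) hnf

/-! ### Iterated-step simulation -/

lemma iterF {P : List (FRCRule T)} (hP : P ∈ G.comps) :
    ∀ {n : ℕ} {u v v' : Word T}, iter (frcStep P) n u v → Col G v v' →
      ∃ u', Col G u u' ∧ iter (OComp G P).Step n u' v'
  | 0, u, v, v', h, hc => by
      have h' : u = v := h
      subst h'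
      exact ⟨v', hc, rfl⟩
  | n+1, u, v, v', h, hc => by
      obtain ⟨w, hw, h'⟩ := h
      obtain ⟨w', hcw, h₂⟩ := iterF hP h' hc
      obtain ⟨u', hcu, h₁⟩ := microF G hP hw hcw
      exact ⟨u', hcu, w', h₁, h₂⟩

lemma iterF0 {P : List (FRCRule T)} (hP : P ∈ G.comps) {n : ℕ} {v v' : Word T}
    (h : iter (frcStep P) (n+1) [Sum.inl G.start] v) (hc : Col G v v') :
    iter (OComp G P).Step (n+1) [Sum.inl G.start] v' := by
  obtain ⟨w, hw, h'⟩ := h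
  obtain ⟨w', hcw, h₂⟩ := iterF G hP h' hc
  exact ⟨w', microF0 G hw hcw, h₂⟩

lemma iterB {P : List (FRCRule T)} :
    ∀ {n : ℕ} {u v : Word T}, iter (OComp G P).Step n u v → good G u → nofail G v →
      good G v ∧ iter (frcStep P) n (er G u) (er G v)
  | 0, u, v, h, hg, _ => by
      have h' : u = v := h
      subst h'
      exact ⟨hg, rfl⟩
  | n+1, u, v, h, hg, hnv => by
      obtain ⟨w, hw, h'⟩ := h
      have hfw : nofail G w := fun hf =>
        hnv (iter_preserve (p := fun w => Sum.inl (fl G) ∈ w)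
          (fun a b hab => microPersist G hab) h' hf)
      obtain ⟨hgw, hstep⟩ := microB G hw hg hfw
      obtain ⟨hgv, hrest⟩ := iterB h' hgw hnv
      exact ⟨hgv, _, hstep, hrest⟩

/-! ### Mode-level simulation -/

lemma modePersist {P : List (FRCRule T)} {m : Mode} {u v : Word T}
    (h : ModeRel (OComp G P).Step m u v) (hf : Sum.inl (fl G) ∈ u) :
    Sum.inl (fl G) ∈ v := by
  have key : ∀ {n : ℕ} {a b : Word T}, iter (OComp G P).Step n a b →
      Sum.inl (fl G) ∈ a → Sum.inl (fl G) ∈ b :=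
    fun h hf => iter_preserve (p := fun w => Sum.inl (fl G) ∈ w)
      (fun a b hab => microPersist G hab) h hf
  cases m with
  | eq k => exact key h hf
  | le k => obtain ⟨j, -, -, h⟩ := h; exact key h hf
  | ge k => obtain ⟨j, -, h⟩ := h; exact key h hf
  | star => obtain ⟨n, h⟩ := rtg_iff_iter.mp h; exact key h hf
  | t => obtain ⟨n, h⟩ := rtg_iff_iter.mp h.1; exact key h hf

lemma modeF {P : List (FRCRule T)} {m : Mode} {u v v' : Word T} (hm : m ≠ Mode.t)
    (hP : P ∈ G.comps) (h : ModeRel (frcStep P) m u v) (hc : Col G v v') :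
    ∃ u', Col G u u' ∧ ModeRel (OComp G P).Step m u' v' := by
  cases m with
  | eq k => exact iterF G hP h hc
  | le k =>
      obtain ⟨j, h1, h2, h⟩ := h
      obtain ⟨u', hcu, h'⟩ := iterF G hP h hc
      exact ⟨u', hcu, j, h1, h2, h'⟩
  | ge k =>
      obtain ⟨j, h1, h⟩ := h
      obtain ⟨u', hcu, h'⟩ := iterF G hP h hc
      exact ⟨u', hcu, j, h1, h'⟩
  | star =>
      obtain ⟨n, h⟩ := rtg_iff_iter.mp h
      obtain ⟨u', hcu, h'⟩ := iterF G hP h hc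
      exact ⟨u', hcu, rtg_iff_iter.mpr ⟨n, h'⟩⟩
  | t => exact absurd rfl hm

lemma modeB {P : List (FRCRule T)} {m : Mode} {u v : Word T} (hm : m ≠ Mode.t)
    (h : ModeRel (OComp G P).Step m u v) (hg : good G u) (hnf : nofail G v) :
    good G v ∧ ModeRel (frcStep P) m (er G u) (er G v) := by
  cases m with
  | eq k => exact iterB G h hg hnf
  | le k =>
      obtain ⟨j, h1, h2, h⟩ := h
      obtain ⟨hgv, h'⟩ := iterB G h hg hnf
      exact ⟨hgv, j, h1, h2, h'⟩
  | ge k =>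
      obtain ⟨j, h1, h⟩ := h
      obtain ⟨hgv, h'⟩ := iterB G h hg hnf
      exact ⟨hgv, j, h1, h'⟩
  | star =>
      obtain ⟨n, h⟩ := rtg_iff_iter.mp h
      obtain ⟨hgv, h'⟩ := iterB G h hg hnf
      exact ⟨hgv, rtg_iff_iter.mpr ⟨n, h'⟩⟩
  | t => exact absurd rfl hm

lemma sysF0 {m : Mode} {k : ℕ} (hk : 1 ≤ k)
    (hcase : m = Mode.eq k ∨ m = Mode.le k ∨ m = Mode.ge k)
    {v v' : Word T} (h : G.SysStep m [Sum.inl G.start] v) (hc : Col G v v') :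
    (toOCD G).SysStep m [Sum.inl G.start] v' := by
  obtain ⟨P, hP, hmode⟩ := h
  refine ⟨OComp G P, List.mem_map_of_mem hP, ?_⟩
  rcases hcase with rfl | rfl | rfl
  · obtain ⟨k', rfl⟩ : ∃ k', k = k' + 1 := ⟨k - 1, by omega⟩
    exact iterF0 G hP hmode hc
  · obtain ⟨j, h1, h2, hiter⟩ := hmode
    obtain ⟨j', rfl⟩ : ∃ j', j = j' + 1 := ⟨j - 1, by omega⟩
    exact ⟨j' + 1, h1, h2, iterF0 G hP hiter hc⟩
  · obtain ⟨j, h1, hiter⟩ := hmode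
    obtain ⟨j', rfl⟩ : ∃ j', j = j' + 1 := ⟨j - 1, by omega⟩
    exact ⟨j' + 1, h1, iterF0 G hP hiter hc⟩

/-! ### Top-level simulation -/

lemma topF {m : Mode} (hm : m ≠ Mode.t) :
    ∀ {u v : Word T}, Relation.ReflTransGen (G.SysStep m) u v → ∀ {v'}, Col G v v' →
      ∃ u', Col G u u' ∧ Relation.ReflTransGen ((toOCD G).SysStep m) u' v' := by
  intro u v h
  induction h with
  | refl => exact fun hc => ⟨_, hc, .refl⟩
  | tail _ h2 ih =>
      intro v' hc
      obtain ⟨P, hP, hmode⟩ := h2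
      obtain ⟨b', hcb, hmode'⟩ := modeF G hm hP hmode hc
      obtain ⟨u', hcu, hrtg⟩ := ih hcb
      exact ⟨u', hcu, hrtg.tail ⟨OComp G P, List.mem_map_of_mem hP, hmode'⟩⟩

lemma topB {m : Mode} (hm : m ≠ Mode.t) :
    ∀ {u v : Word T}, Relation.ReflTransGen ((toOCD G).SysStep m) u v →
      good G u → nofail G v →
      good G v ∧ Relation.ReflTransGen (G.SysStep m) (er G u) (er G v) := by
  intro u v h
  induction h with
  | refl => exact fun hg _ => ⟨hg, .refl⟩
  | tail _ h2 ih =>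
      intro hg hnv
      obtain ⟨C, hC, hmode⟩ := h2
      obtain ⟨P, hP, rfl⟩ := List.mem_map.mp hC
      have hnb : nofail G _ := fun hf => hnv (modePersist G hmode hf)
      obtain ⟨hgb, hrtg⟩ := ih hg hnb
      obtain ⟨hgc, hmode'⟩ := modeB G hm hmode hgb hnv
      exact ⟨hgc, hrtg.tail ⟨P, hP, hmode'⟩⟩

/-! ### Star mode: collapse to single steps -/

def uS (u v : Word T) : Prop := ∃ P ∈ G.comps, frcStep P u v

def uS' (u v : Word T) : Prop := ∃ P ∈ G.comps, (OComp G P).Step u v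

lemma star_lang_frc {u v : Word T} :
    Relation.ReflTransGen (G.SysStep .star) u v ↔ Relation.ReflTransGen (uS G) u v := by
  constructor
  · intro h
    induction h with
    | refl => exact .refl
    | tail _ h2 ih =>
        obtain ⟨P, hP, h2⟩ := h2
        exact ih.trans (Relation.ReflTransGen.mono
          (fun a b hab => ⟨P, hP, hab⟩) _ _ (h2 : Relation.ReflTransGen _ _ _))
  · intro h
    exact Relation.ReflTransGen.mono (fun a b ⟨P, hP, hab⟩ =>
      ⟨P, hP, Relation.ReflTransGen.single hab⟩) _ _ h

lemma star_lang_ocd {u v : Word T} :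
    Relation.ReflTransGen ((toOCD G).SysStep .star) u v ↔
      Relation.ReflTransGen (uS' G) u v := by
  constructor
  · intro h
    induction h with
    | refl => exact .refl
    | tail _ h2 ih =>
        obtain ⟨C, hC, h2⟩ := h2
        obtain ⟨P, hP, rfl⟩ := List.mem_map.mp hC
        exact ih.trans (Relation.ReflTransGen.mono
          (fun a b hab => ⟨P, hP, hab⟩) _ _ (h2 : Relation.ReflTransGen _ _ _))
  · intro h
    exact Relation.ReflTransGen.mono (fun a b ⟨P, hP, hab⟩ =>
      ⟨OComp G P, List.mem_map_of_mem hP, Relation.ReflTransGen.single hab⟩) _ _ h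

lemma topFstar :
    ∀ {u v : Word T}, Relation.ReflTransGen (uS G) u v → ∀ {v'}, Col G v v' →
      ∃ u', Col G u u' ∧ Relation.ReflTransGen (uS' G) u' v' := by
  intro u v h
  induction h with
  | refl => exact fun hc => ⟨_, hc, .refl⟩
  | tail _ h2 ih =>
      intro v' hc
      obtain ⟨P, hP, hstep⟩ := h2
      obtain ⟨b', hcb, hstep'⟩ := microF G hP hstep hc
      obtain ⟨u', hcu, hrtg⟩ := ih hcb
      exact ⟨u', hcu, hrtg.tail ⟨P, hP, hstep'⟩⟩

/-! ### Language equality -/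

lemma m_ne_t {m : Mode}
    (hm : (∃ k, 1 ≤ k ∧ (m = .eq k ∨ m = .le k ∨ m = .ge k)) ∨ m = .star) :
    m ≠ Mode.t := by
  rcases hm with ⟨k, -, rfl | rfl | rfl⟩ | rfl <;> exact fun h => Mode.noConfusion h

lemma lang_eq {m : Mode}
    (hm : (∃ k, 1 ≤ k ∧ (m = .eq k ∨ m = .le k ∨ m = .ge k)) ∨ m = .star) :
    G.lang m = (toOCD G).lang m := by
  have hmt := m_ne_t hm
  ext w
  constructor
  · intro hmem
    have h : Relation.ReflTransGen (G.SysStep m) [Sum.inl G.start] (encodeWord w) := hmem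
    show Relation.ReflTransGen ((toOCD G).SysStep m) [Sum.inl G.start] (encodeWord w)
    rcases hm with ⟨k, hk, hcase⟩ | rfl
    · rcases h.cases_head with heq | ⟨b, h1, h2⟩
      · exact absurd heq (start_ne_encode G w)
      · obtain ⟨b', hcb, h2'⟩ := topF G hmt h2 (col_encode G w)
        exact Relation.ReflTransGen.head (sysF0 G hk hcase h1 hcb) h2'
    · rw [star_lang_ocd]
      have h' := (star_lang_frc G).mp h
      rcases h'.cases_head with heq | ⟨b, hstep, h2⟩
      · exact absurd heq (start_ne_encode G w)
      · obtain ⟨P, hP, h1⟩ := hstep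
        obtain ⟨b', hcb, h2'⟩ := topFstar G h2 (col_encode G w)
        exact Relation.ReflTransGen.head ⟨P, hP, microF0 G h1 hcb⟩ h2'
  · intro hmem
    have h : Relation.ReflTransGen ((toOCD G).SysStep m)
        [Sum.inl G.start] (encodeWord w) := hmem
    have hres := topB G hmt h (Or.inl rfl) (nofail_encode G w)
    have h2 := hres.2
    rw [er_start, er_encode] at h2
    exact h2

lemma toOCD_ne (hne : G.NonErasing) : (toOCD G).NonErasing := by
  intro C hC
  obtain ⟨P, hP, rfl⟩ := List.mem_map.mp hC
  intro q hq
  rcases (mem_OComp_rules G).mp hq with h | h | h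
  · obtain ⟨i, r, -, hrP, y', hy', rfl⟩ := (mem_mains G).mp h
    intro hq
    exact hne P hP r hrP (List.forall₂_nil_right_iff.mp (hq ▸ hy' : Col G r.rhs []))
  · obtain ⟨r, hrP, -, -, y', hy', rfl⟩ := (mem_sVars G).mp h
    intro hq
    exact hne P hP r hrP (List.forall₂_nil_right_iff.mp (hq ▸ hy' : Col G r.rhs []))
  · obtain ⟨r, -, B, -, j, -, rfl⟩ := (mem_dums G).mp h
    intro hq
    simp [CFRule.Erasing] at hq

/-! ### The converse simulation: ordered components as forbidden random context -/

open Classical in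
noncomputable def fb (C : OComponent T) (r : CFRule T) : Finset ℕ :=
  ((C.rules.filter fun r' => decide (C.gt r' r)).map (·.lhs)).toFinset

noncomputable def compFRC (C : OComponent T) : List (FRCRule T) :=
  C.rules.map fun r => ⟨r.lhs, r.rhs, fb C r⟩

noncomputable def toFRC (H : OCDGS T) : FRCCDGS T := ⟨H.comps.map compFRC, H.start⟩

lemma frc_step_iff (C : OComponent T) (u v : Word T) :
    frcStep (compFRC C) u v ↔ C.Step u v := by
  constructor
  · rintro ⟨ρ, hρ, ⟨x, z, hu, hv⟩, hforb⟩
    obtain ⟨r, hr, rfl⟩ := List.mem_map.mp hρ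
    refine ⟨r, hr, ⟨x, z, hu, hv⟩, ?_⟩
    intro r' hr' hgt
    apply hforb r'.lhs
    simp only [fb, List.mem_toFinset, List.mem_map, List.mem_filter, decide_eq_true_eq]
    exact ⟨r', ⟨hr', hgt⟩, rfl⟩
  · rintro ⟨r, hr, ⟨x, z, hu, hv⟩, hcond⟩
    refine ⟨⟨r.lhs, r.rhs, fb C r⟩, List.mem_map_of_mem hr, ⟨x, z, hu, hv⟩, ?_⟩
    intro A hA
    simp only [fb, List.mem_toFinset, List.mem_map, List.mem_filter, decide_eq_true_eq] at hA
    obtain ⟨r', ⟨hr', hgt⟩, rfl⟩ := hA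
    exact hcond r' hr' hgt

lemma sys_iff (H : OCDGS T) (m : Mode) (u v : Word T) :
    (toFRC H).SysStep m u v ↔ H.SysStep m u v := by
  constructor
  · rintro ⟨P, hP, h⟩
    obtain ⟨C, hC, rfl⟩ := List.mem_map.mp hP
    rw [modeRel_congr (frc_step_iff C) m] at h
    exact ⟨C, hC, h⟩
  · rintro ⟨C, hC, h⟩
    refine ⟨compFRC C, List.mem_map_of_mem hC, ?_⟩
    rw [modeRel_congr (frc_step_iff C) m]
    exact h

lemma lang_eq' (H : OCDGS T) (m : Mode) : (toFRC H).lang m = H.lang m := by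
  have hss : (toFRC H).SysStep m = H.SysStep m :=
    funext fun u => funext fun v => propext (sys_iff H m u v)
  show langOf ((toFRC H).SysStep m) (toFRC H).start = langOf (H.SysStep m) H.start
  rw [hss]
  rfl

lemma toFRC_ne (H : OCDGS T) (hne : H.NonErasing) : (toFRC H).NonErasing := by
  intro P hP r hr
  obtain ⟨C, hC, rfl⟩ := List.mem_map.mp hP
  obtain ⟨r₀, hr₀, rfl⟩ := List.mem_map.mp hr
  exact hne C hC r₀ hr₀

end FRCSim

open GrammarSystems

/-- For every mode `m ∈ {=k, ≤k, ≥k : k ≥ 1} ∪ {*}`,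
`fRCCD(m) = OCD(m)` and `fRCCD^{-λ}(m) = OCD^{-λ}(m)`. -/
theorem fRCCD_eq_OCD (T : Type) [Fintype T] (m : Mode)
    (hm : (∃ k, 1 ≤ k ∧ (m = .eq k ∨ m = .le k ∨ m = .ge k)) ∨ m = .star) :
    fRCCD T m = OCD T m ∧ fRCCDne T m = OCDne T m := by
  constructor
  · ext L
    constructor
    · rintro ⟨G, rfl⟩
      exact ⟨FRCSim.toOCD G, FRCSim.lang_eq G hm⟩
    · rintro ⟨H, rfl⟩
      exact ⟨FRCSim.toFRC H, (FRCSim.lang_eq' H m).symm⟩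
  · ext L
    constructor
    · rintro ⟨G, hne, rfl⟩
      exact ⟨FRCSim.toOCD G, FRCSim.toOCD_ne G hne, FRCSim.lang_eq G hm⟩
    · rintro ⟨H, hne, rfl⟩
      exact ⟨FRCSim.toFRC H, FRCSim.toFRC_ne H hne, (FRCSim.lang_eq' H m).symm⟩
end

section
/- For every mode m ∈ {≤k : k ≥ 1} ∪ {*, =1, ≥1}, the class of languages generated by forbidden random context cooperating distributed grammar systems in mode m equals the class of languages generated by forbidden random context grammars, both when erasing productions are allowed and when they are disallowed: fRCCD(m) = fRC and fRCCD^{-λ}(m) = fRC^{-λ}. -/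
open GrammarSystems

section Aux

variable {T : Type}

lemma iter_to_rtg {α : Type*} {r : α → α → Prop} :
    ∀ n {u v}, iter r n u v → Relation.ReflTransGen r u v
  | 0, u, v, h => by cases h; rfl
  | n + 1, u, v, ⟨w, hw, h⟩ =>
    Relation.ReflTransGen.head hw (iter_to_rtg n h)

lemma mode_to_rtg {α : Type*} {r : α → α → Prop} {m : Mode} {u v : α}
    (h : ModeRel r m u v) : Relation.ReflTransGen r u v := by
  cases m with
  | le k => obtain ⟨j, _, _, h⟩ := h; exact iter_to_rtg j h
  | eq k => exact iter_to_rtg k h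
  | ge k => obtain ⟨j, _, h⟩ := h; exact iter_to_rtg j h
  | star => exact h
  | t => exact h.1

lemma step_to_mode {α : Type*} {r : α → α → Prop} {m : Mode}
    (hm : (∃ k, 1 ≤ k ∧ m = .le k) ∨ m = .star ∨ m = .eq 1 ∨ m = .ge 1)
    {u v : α} (h : r u v) : ModeRel r m u v := by
  have h1 : iter r 1 u v := ⟨v, h, rfl⟩
  rcases hm with ⟨k, hk, rfl⟩ | rfl | rfl | rfl
  · exact ⟨1, le_refl 1, hk, h1⟩
  · exact Relation.ReflTransGen.single h
  · exact h1
  · exact ⟨1, le_refl 1, h1⟩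

lemma rtg_le {α : Type*} {r s : α → α → Prop}
    (h : ∀ u v, r u v → Relation.ReflTransGen s u v) {u v : α}
    (huv : Relation.ReflTransGen r u v) : Relation.ReflTransGen s u v := by
  induction huv with
  | refl => rfl
  | tail _ h' ih => exact ih.trans (h _ _ h')

lemma frcStep_mono {P : List (FRCRule T)} {Ps : List (List (FRCRule T))}
    (hP : P ∈ Ps) {u v : Word T} (h : frcStep P u v) : frcStep Ps.flatten u v := by
  obtain ⟨r, hr, hrw⟩ := h
  exact ⟨r, List.mem_flatten.2 ⟨P, hP, hr⟩, hrw⟩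

lemma frcStep_join {Ps : List (List (FRCRule T))} {u v : Word T}
    (h : frcStep Ps.flatten u v) : ∃ P ∈ Ps, frcStep P u v := by
  obtain ⟨r, hr, hrw⟩ := h
  obtain ⟨P, hP, hrP⟩ := List.mem_flatten.1 hr
  exact ⟨P, hP, r, hrP, hrw⟩

lemma lang_eq_join {m : Mode}
    (hm : (∃ k, 1 ≤ k ∧ m = .le k) ∨ m = .star ∨ m = .eq 1 ∨ m = .ge 1)
    (G : FRCCDGS T) : G.lang m = langOf (frcStep G.comps.flatten) G.start := by
  unfold FRCCDGS.lang langOf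
  ext w
  constructor
  · intro h
    refine rtg_le (fun u v huv => ?_) h
    obtain ⟨P, hP, hmr⟩ := huv
    exact rtg_le (fun a b hab => Relation.ReflTransGen.single (frcStep_mono hP hab))
      (mode_to_rtg hmr)
  · intro h
    refine rtg_le (fun u v huv => ?_) h
    obtain ⟨P, hP, hs⟩ := frcStep_join huv
    exact Relation.ReflTransGen.single ⟨P, hP, step_to_mode hm hs⟩

lemma lang_single {m : Mode}
    (hm : (∃ k, 1 ≤ k ∧ m = .le k) ∨ m = .star ∨ m = .eq 1 ∨ m = .ge 1)
    (P : List (FRCRule T)) (S : ℕ) :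
    (FRCCDGS.mk [P] S).lang m = langOf (frcStep P) S := by
  rw [lang_eq_join hm]
  simp [langOf]
  rfl

end Aux

/-- For every mode `m ∈ {≤k : k ≥ 1} ∪ {*, =1, ≥1}`,
`fRCCD(m) = fRC` and `fRCCD^{-λ}(m) = fRC^{-λ}`. -/
theorem fRCCD_eq_fRC (T : Type) [Fintype T] (m : Mode)
    (hm : (∃ k, 1 ≤ k ∧ m = .le k) ∨ m = .star ∨ m = .eq 1 ∨ m = .ge 1) :
    fRCCD T m = fRC T ∧ fRCCDne T m = fRCne T := by
  constructor
  · ext L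
    constructor
    · rintro ⟨G, rfl⟩
      exact ⟨G.comps.flatten, G.start, lang_eq_join hm G⟩
    · rintro ⟨P, S, rfl⟩
      exact ⟨FRCCDGS.mk [P] S, (lang_single hm P S).symm⟩
  · ext L
    constructor
    · rintro ⟨G, hne, rfl⟩
      refine ⟨G.comps.flatten, G.start, fun r hr => ?_, lang_eq_join hm G⟩
      obtain ⟨P, hP, hrP⟩ := List.mem_flatten.1 hr
      exact hne P hP r hrP
    · rintro ⟨P, S, hne, rfl⟩
      refine ⟨FRCCDGS.mk [P] S, fun Q hQ r hr => ?_, (lang_single hm P S).symm⟩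
      simp only [List.mem_singleton] at hQ
      exact hne r (hQ ▸ hr)
end

section
/- Forbidden random context entry conditions do not increase the power of CD grammar systems in the t-mode: CD(t, frc) = CD(t) and CD^{-λ}(t, frc) = CD^{-λ}(t). -/
open GrammarSystems

namespace CDfrcProof
set_option linter.unusedSectionVars false
open GrammarSystems

variable {T : Type}

/-! ### Symbol renaming -/

def smap (g : ℕ → ℕ) : Sym T → Sym T := Sum.map g id

@[simp] lemma smap_inl (g : ℕ → ℕ) (A : ℕ) :
    smap (T := T) g (Sum.inl A) = Sum.inl (g A) := rfl

@[simp] lemma smap_inr (g : ℕ → ℕ) (t : T) : smap g (Sum.inr t) = Sum.inr t := rfl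

lemma pair_left_inj (k : ℕ) : Function.Injective (Nat.pair k) :=
  fun _ _ h => (Nat.pair_eq_pair.mp h).2

lemma mem_map_smap_inl {g : ℕ → ℕ} {u : Word T} {n : ℕ} :
    Sum.inl n ∈ u.map (smap g) ↔ ∃ B, Sum.inl B ∈ u ∧ g B = n := by
  rw [List.mem_map]
  constructor
  · rintro ⟨x, hx, hval⟩
    cases x with
    | inl B => exact ⟨B, hx, by simpa using hval⟩
    | inr t => simp [smap] at hval
  · rintro ⟨B, hB, hgB⟩
    exact ⟨Sum.inl B, hB, by simp [hgB]⟩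

lemma map_smap_eq_encode {g : ℕ → ℕ} :
    ∀ {u : Word T} {w : List T}, u.map (smap g) = encodeWord w → u = encodeWord w := by
  intro u
  induction u with
  | nil =>
    intro w h
    cases w with
    | nil => rfl
    | cons t w => simp [encodeWord] at h
  | cons x u ih =>
    intro w h
    cases w with
    | nil => simp [encodeWord] at h
    | cons t w =>
      simp only [encodeWord, List.map_cons, List.cons.injEq] at h ⊢
      obtain ⟨h1, h2⟩ := h
      refine ⟨?_, ih h2⟩
      cases x with
      | inl A => simp [smap] at h1
      | inr s => simpa using h1

@[simp] lemma encode_map_smap (g : ℕ → ℕ) (w : List T) :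
    (encodeWord w).map (smap g) = encodeWord w := by
  simp [encodeWord, List.map_map, Function.comp_def]

/-! ### basic cfStep facts -/

lemma cfStep_append {P : List (CFRule T)} {u v : Word T} (h : cfStep P u v) (a b : Word T) :
    cfStep P (a ++ u ++ b) (a ++ v ++ b) := by
  obtain ⟨r, hr, x, z, hu, hv⟩ := h
  refine ⟨r, hr, a ++ x, z ++ b, ?_, ?_⟩ <;> simp [hu, hv]

lemma cfStep_rt_append {P : List (CFRule T)} {u v : Word T}
    (h : Relation.ReflTransGen (cfStep P) u v) (a b : Word T) :
    Relation.ReflTransGen (cfStep P) (a ++ u ++ b) (a ++ v ++ b) := by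
  induction h with
  | refl => exact .refl
  | tail _ h2 ih => exact ih.tail (cfStep_append h2 a b)

lemma cfStep_of_mem_lhs {P : List (CFRule T)} {r : CFRule T} {u : Word T}
    (hr : r ∈ P) (hm : Sum.inl r.lhs ∈ u) : ∃ v, cfStep P u v := by
  obtain ⟨x, z, hxz⟩ := List.append_of_mem hm
  exact ⟨x ++ r.rhs ++ z, r, hr, x, z, by simp [hxz], rfl⟩

lemma lhs_mem_of_cfStep {P : List (CFRule T)} {u v : Word T} (h : cfStep P u v) :
    ∃ r ∈ P, Sum.inl r.lhs ∈ u := by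
  obtain ⟨r, hr, x, z, hu, -⟩ := h
  exact ⟨r, hr, by simp [hu]⟩

lemma modeT_of_no_step {α : Type*} {r : α → α → Prop} {s s' : α} (h : ∀ w, ¬ r s w)
    (hm : ModeRel r .t s s') : s' = s := by
  obtain ⟨hrt, -⟩ := hm
  rcases hrt.cases_head with h1 | ⟨w, hw, -⟩
  · exact h1.symm
  · exact absurd hw (h w)

lemma modeT_idle {R : List (CFRule T)} {s s' : Word T}
    (h : ∀ r ∈ R, Sum.inl r.lhs ∉ s) (hm : ModeRel (cfStep R) .t s s') : s' = s := by
  refine modeT_of_no_step (fun w hw => ?_) hm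
  obtain ⟨r, hr, hmem⟩ := lhs_mem_of_cfStep hw
  exact h r hr hmem

/-! ### renaming components: every rule is `A → [out A]` -/

section Rename

variable (R : List (CFRule T)) (out : ℕ → Sym T)

/-- The total renaming map induced by `R` and `out`. -/
def rout : Sym T → Sym T
  | .inl A => if A ∈ R.map CFRule.lhs then out A else .inl A
  | .inr t => .inr t

@[simp] lemma rout_inr (t : T) : rout R out (Sum.inr t) = Sum.inr t := rfl

lemma rout_inl (A : ℕ) :
    rout R out (Sum.inl A) = if A ∈ R.map CFRule.lhs then out A else Sum.inl A := rfl

variable {R out}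

lemma rout_fix {x : Sym T} (hx : ∀ r ∈ R, x ≠ Sum.inl r.lhs) : rout R out x = x := by
  cases x with
  | inl A =>
    rw [rout_inl, if_neg]
    intro hA
    obtain ⟨r, hr, hlhs⟩ := List.mem_map.mp hA
    exact hx r hr (by rw [hlhs])
  | inr t => rfl

lemma rout_lhs {r : CFRule T} (hr : r ∈ R) :
    rout R out (Sum.inl r.lhs) = out r.lhs := by
  rw [rout_inl, if_pos (List.mem_map.mpr ⟨r, hr, rfl⟩)]

variable (hR1 : ∀ r ∈ R, r.rhs = [out r.lhs])
variable (hR2 : ∀ r ∈ R, ∀ r' ∈ R, out r.lhs ≠ Sum.inl r'.lhs)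
include hR2

lemma rout_fix_out {r : CFRule T} (hr : r ∈ R) :
    rout R out (out r.lhs) = out r.lhs :=
  rout_fix (fun r' hr' => hR2 r hr r' hr')

include hR1

lemma rout_step_invariant {a b : Word T} (h : cfStep R a b) :
    a.map (rout R out) = b.map (rout R out) := by
  obtain ⟨r, hr, x, z, ha, hb⟩ := h
  rw [ha, hb, hR1 r hr]
  simp only [List.map_append, List.map_cons, List.map_nil, List.append_cancel_left_eq,
    List.append_cancel_right_eq, List.cons.injEq, and_true]
  rw [rout_lhs hr, rout_fix_out hR2 hr]

omit hR1 in
lemma rout_terminal (s : Word T) : ∀ v, ¬ cfStep R (s.map (rout R out)) v := by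
  intro v hv
  obtain ⟨r, hr, hmem⟩ := lhs_mem_of_cfStep hv
  obtain ⟨x, hx, hval⟩ := List.mem_map.mp hmem
  cases x with
  | inl A =>
    rw [rout_inl] at hval
    split at hval
    · rename_i hA
      obtain ⟨r0, hr0, hlhs0⟩ := List.mem_map.mp hA
      rw [← hlhs0] at hval
      exact hR2 r0 hr0 r hr hval
    · rename_i hA
      rw [Sum.inl.injEq] at hval
      exact hA (hval ▸ List.mem_map.mpr ⟨r, hr, rfl⟩)
  | inr t => simp at hval

lemma rout_rt (s : Word T) :
    Relation.ReflTransGen (cfStep R) s (s.map (rout R out)) := by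
  induction s with
  | nil => exact .refl
  | cons e s ih =>
    have ihc : Relation.ReflTransGen (cfStep R) (e :: s) (e :: s.map (rout R out)) := by
      have := cfStep_rt_append ih [e] []
      simpa using this
    cases e with
    | inl A =>
      by_cases hA : A ∈ R.map CFRule.lhs
      · obtain ⟨r, hr, hlhs⟩ := List.mem_map.mp hA
        have hstep : cfStep R (Sum.inl A :: s.map (rout R out))
            (out A :: s.map (rout R out)) := by
          refine ⟨r, hr, [], s.map (rout R out), by simp [hlhs], ?_⟩
          rw [hR1 r hr, hlhs]; rfl
        have : (Sum.inl A :: s).map (rout R out) = out A :: s.map (rout R out) := by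
          simp only [List.map_cons, rout_inl, if_pos hA]
        rw [this]
        exact ihc.tail hstep
      · have hfix : rout R out (Sum.inl A) = Sum.inl A := by
          refine rout_fix (fun r hr h => hA ?_)
          injection h with h'
          exact List.mem_map.mpr ⟨r, hr, h'.symm⟩
        have : (Sum.inl A :: s).map (rout R out) = Sum.inl A :: s.map (rout R out) := by
          rw [List.map_cons, hfix]
        rw [this]
        exact ihc
    | inr t => exact ihc

lemma rename_t_iff {s s' : Word T} :
    ModeRel (cfStep R) .t s s' ↔ s' = s.map (rout R out) := by
  constructor
  · rintro ⟨hrt, hterm⟩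
    have hmap : s.map (rout R out) = s'.map (rout R out) := by
      clear hterm
      induction hrt with
      | refl => rfl
      | tail _ h2 ih => rw [ih, rout_step_invariant hR1 hR2 h2]
    have hfix : s'.map (rout R out) = s' := by
      rw [show s' = s'.map id from (List.map_id s').symm]
      rw [List.map_map]
      refine List.map_congr_left (fun x hx => ?_)
      simp only [Function.comp, id]
      refine rout_fix (fun r hr hxr => ?_)
      subst hxr
      obtain ⟨v, hv⟩ := cfStep_of_mem_lhs hr (by simpa using hx)
      exact hterm v hv
    rw [hmap, hfix]
  · rintro rfl
    exact ⟨rout_rt hR1 hR2 s, rout_terminal hR2 s⟩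

end Rename

/-! ### tagged copies of rule sets -/

section Tagged

def mrule (g : ℕ → ℕ) (r : CFRule T) : CFRule T := ⟨g r.lhs, r.rhs.map (smap g)⟩

variable {g : ℕ → ℕ} {R : List (CFRule T)}

lemma tag_step {u v : Word T} (h : cfStep R u v) :
    cfStep (R.map (mrule g)) (u.map (smap g)) (v.map (smap g)) := by
  obtain ⟨r, hr, x, z, hu, hv⟩ := h
  refine ⟨mrule g r, List.mem_map_of_mem hr, x.map (smap g), z.map (smap g), ?_, ?_⟩
  · rw [hu]; simp [mrule]
  · rw [hv]; simp [mrule]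

lemma map_eq_single_middle {u x z : Word T} {y : Sym T}
    (h : u.map (smap g) = x ++ [y] ++ z) :
    ∃ x' a z', u = x' ++ [a] ++ z' ∧ x'.map (smap g) = x ∧ smap g a = y ∧
      z'.map (smap g) = z := by
  rw [List.append_assoc] at h
  obtain ⟨x', m, hu, hx', hm⟩ := List.map_eq_append_iff.mp h
  obtain ⟨m1, z', hm2, hm1, hz'⟩ := List.map_eq_append_iff.mp hm
  match m1, hm1 with
  | [a], hm1 =>
    simp only [List.map_cons, List.map_nil, List.cons.injEq, and_true] at hm1
    exact ⟨x', a, z', by rw [hu, hm2]; simp, hx', hm1, hz'⟩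

variable (hg : Function.Injective g)
include hg

lemma untag_step {u : Word T} {s' : Word T}
    (h : cfStep (R.map (mrule g)) (u.map (smap g)) s') :
    ∃ v, s' = v.map (smap g) ∧ cfStep R u v := by
  obtain ⟨r', hr', x, z, hu, hs'⟩ := h
  obtain ⟨r, hr, rfl⟩ := List.mem_map.mp hr'
  obtain ⟨x', a, z', hu', hx', ha, hz'⟩ := map_eq_single_middle hu
  have ha' : a = Sum.inl r.lhs := by
    cases a with
    | inl B =>
      simp only [mrule, smap_inl, Sum.inl.injEq] at ha
      rw [hg ha]
    | inr t => simp [mrule] at ha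
  refine ⟨x' ++ r.rhs ++ z', ?_, r, hr, x', z', by rw [hu', ha'], rfl⟩
  rw [hs', ← hx', ← hz']
  simp [mrule]

lemma untag_rt {u : Word T} {s' : Word T}
    (h : Relation.ReflTransGen (cfStep (R.map (mrule g))) (u.map (smap g)) s') :
    ∃ v, s' = v.map (smap g) ∧ Relation.ReflTransGen (cfStep R) u v := by
  induction h with
  | refl => exact ⟨u, rfl, .refl⟩
  | tail _ h2 ih =>
    obtain ⟨v, rfl, hrt⟩ := ih
    obtain ⟨v', rfl, hst⟩ := untag_step hg h2
    exact ⟨v', rfl, hrt.tail hst⟩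

lemma tag_modeT {u v : Word T} (h : ModeRel (cfStep R) .t u v) :
    ModeRel (cfStep (R.map (mrule g))) .t (u.map (smap g)) (v.map (smap g)) := by
  obtain ⟨hrt, hterm⟩ := h
  constructor
  · clear hterm
    induction hrt with
    | refl => exact .refl
    | tail _ h2 ih => exact ih.tail (tag_step h2)
  · intro w hw
    obtain ⟨v', -, hst⟩ := untag_step hg hw
    exact hterm v' hst

lemma untag_modeT {u : Word T} {s' : Word T}
    (h : ModeRel (cfStep (R.map (mrule g))) .t (u.map (smap g)) s') :
    ∃ v, s' = v.map (smap g) ∧ ModeRel (cfStep R) .t u v := by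
  obtain ⟨hrt, hterm⟩ := h
  obtain ⟨v, rfl, hrt'⟩ := untag_rt hg hrt
  exact ⟨v, rfl, hrt', fun w hw => hterm (w.map (smap g)) (tag_step hw)⟩

end Tagged

/-! ### The simulation construction -/

def enumL {α : Type} (l : List α) : List (ℕ × α) := l.zipIdx.map Prod.swap

lemma mem_enumL_iff {α : Type} {l : List α} {i : ℕ} {a : α} :
    (i, a) ∈ enumL l ↔ l[i]? = some a := by
  simp [enumL, List.mem_zipIdx_iff_getElem?]

section Sim

variable (G : RCCDGS T)

/-- All nonterminals mentioned by `G`. -/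
def NN : List ℕ :=
  G.start ::
    G.comps.flatMap fun C => C.rules.flatMap fun r => r.lhs :: r.rhs.filterMap Sum.getLeft?

/-- The trap symbol. -/
def Fail : ℕ := Nat.pair 1 0

/-- Entry component: tags all (plain-encoded) nonterminals with tag `i + 2`,
sending forbidden nonterminals to the trap symbol. -/
def Ecomp (i : ℕ) (C : RCComponent T) : RCComponent T :=
  ⟨(NN G).map fun A =>
      ⟨Nat.pair 0 A, [Sum.inl (if A ∈ C.forb then Fail else Nat.pair (i + 2) A)]⟩, ∅, ∅⟩

def Eout (i : ℕ) (C : RCComponent T) : ℕ → Sym T := fun n =>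
  Sum.inl (if (Nat.unpair n).2 ∈ C.forb then Fail else Nat.pair (i + 2) (Nat.unpair n).2)

/-- Working component: the `i`-tagged copy of the rules of `C`. -/
def Wcomp (i : ℕ) (C : RCComponent T) : RCComponent T :=
  ⟨C.rules.map (mrule (Nat.pair (i + 2))), ∅, ∅⟩

/-- Exit component: untags all `i`-tagged nonterminals. -/
def Xcomp (i : ℕ) : RCComponent T :=
  ⟨(NN G).map fun A => ⟨Nat.pair (i + 2) A, [Sum.inl (Nat.pair 0 A)]⟩, ∅, ∅⟩

def Xout : ℕ → Sym T := fun n => Sum.inl (Nat.pair 0 (Nat.unpair n).2)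

/-- The simulating ordinary CD grammar system. -/
def simG : RCCDGS T :=
  ⟨(enumL G.comps).flatMap fun p => [Ecomp G p.1 p.2, Wcomp p.1 p.2, Xcomp G p.1],
   Nat.pair 0 G.start⟩

/-! #### rename hypotheses for the E- and X-components -/

lemma Ecomp_hyp1 (i : ℕ) (C : RCComponent T) :
    ∀ r ∈ (Ecomp G i C).rules, r.rhs = [Eout i C r.lhs] := by
  intro r hr
  obtain ⟨A, -, rfl⟩ := List.mem_map.mp hr
  simp [Eout, Nat.unpair_pair]

lemma Ecomp_hyp2 (i : ℕ) (C : RCComponent T) :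
    ∀ r ∈ (Ecomp G i C).rules, ∀ r' ∈ (Ecomp G i C).rules,
      Eout i C r.lhs ≠ Sum.inl r'.lhs := by
  intro r hr r' hr'
  obtain ⟨A, -, rfl⟩ := List.mem_map.mp hr
  obtain ⟨B, -, rfl⟩ := List.mem_map.mp hr'
  intro h
  simp only [Eout, Nat.unpair_pair, Sum.inl.injEq] at h
  split_ifs at h
  · rw [Fail, Nat.pair_eq_pair] at h; omega
  · rw [Nat.pair_eq_pair] at h; omega

lemma Xcomp_hyp1 (i : ℕ) :
    ∀ r ∈ (Xcomp G i).rules, r.rhs = [Xout r.lhs] := by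
  intro r hr
  obtain ⟨A, -, rfl⟩ := List.mem_map.mp hr
  simp [Xout, Nat.unpair_pair]

lemma Xcomp_hyp2 (i : ℕ) :
    ∀ r ∈ (Xcomp G i).rules, ∀ r' ∈ (Xcomp G i).rules,
      Xout (T := T) r.lhs ≠ Sum.inl r'.lhs := by
  intro r hr r' hr'
  obtain ⟨A, -, rfl⟩ := List.mem_map.mp hr
  obtain ⟨B, -, rfl⟩ := List.mem_map.mp hr'
  intro h
  simp only [Xout, Nat.unpair_pair, Sum.inl.injEq, Nat.pair_eq_pair] at h
  omega

lemma Ecomp_lhs_map (i : ℕ) (C : RCComponent T) :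
    (Ecomp G i C).rules.map CFRule.lhs = (NN G).map (Nat.pair 0) := by
  simp [Ecomp, List.map_map, Function.comp_def]

lemma Xcomp_lhs_map (i : ℕ) :
    (Xcomp G i).rules.map CFRule.lhs = (NN G).map (Nat.pair (i + 2)) := by
  simp [Xcomp, List.map_map, Function.comp_def]

lemma rout_E_plain (i : ℕ) (C : RCComponent T) {A : ℕ} (hA : A ∈ NN G) :
    rout (Ecomp G i C).rules (Eout i C) (Sum.inl (Nat.pair 0 A))
      = Sum.inl (if A ∈ C.forb then Fail else Nat.pair (i + 2) A) := by
  have hmem : Nat.pair 0 A ∈ (Ecomp G i C).rules.map CFRule.lhs := by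
    rw [Ecomp_lhs_map]
    exact List.mem_map.mpr ⟨A, hA, rfl⟩
  rw [rout_inl, if_pos hmem]
  simp [Eout, Nat.unpair_pair]

lemma rout_X_tag (i : ℕ) {A : ℕ} (hA : A ∈ NN G) :
    rout (Xcomp G i).rules Xout (Sum.inl (Nat.pair (i + 2) A))
      = Sum.inl (Nat.pair 0 A) := by
  have hmem : Nat.pair (i + 2) A ∈ (Xcomp G i).rules.map CFRule.lhs := by
    rw [Xcomp_lhs_map]
    exact List.mem_map.mpr ⟨A, hA, rfl⟩
  rw [rout_inl, if_pos hmem]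
  simp [Xout, Nat.unpair_pair]

/-! #### nonterminal closure -/

def Sub (u : Word T) : Prop := ∀ A, Sum.inl A ∈ u → A ∈ NN G

def Reach (u : Word T) : Prop :=
  Relation.ReflTransGen (G.SysStep .t) [Sum.inl G.start] u

lemma sub_start : Sub G [Sum.inl G.start] := by
  intro A hA
  simp only [List.mem_singleton, Sum.inl.injEq] at hA
  subst hA
  exact List.mem_cons_self

lemma sub_rhs {C : RCComponent T} {r : CFRule T} {A : ℕ} (hC : C ∈ G.comps)
    (hr : r ∈ C.rules) (hA : Sum.inl A ∈ r.rhs) : A ∈ NN G := by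
  refine List.mem_cons.mpr (Or.inr ?_)
  refine List.mem_flatMap.mpr ⟨C, hC, List.mem_flatMap.mpr ⟨r, hr, ?_⟩⟩
  refine List.mem_cons.mpr (Or.inr ?_)
  exact List.mem_filterMap.mpr ⟨Sum.inl A, hA, rfl⟩

lemma sub_cfStep {C : RCComponent T} {u v : Word T} (hC : C ∈ G.comps)
    (h : cfStep C.rules u v) (hs : Sub G u) : Sub G v := by
  obtain ⟨r, hr, x, z, hu, hv⟩ := h
  intro A hA
  rw [hv] at hA
  rcases List.mem_append.mp hA with hA' | hA'
  · rcases List.mem_append.mp hA' with hA'' | hA''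
    · exact hs A (by rw [hu]; simp [hA''])
    · exact sub_rhs G hC hr hA''
  · exact hs A (by rw [hu]; simp [hA'])

lemma sub_rt {C : RCComponent T} {u v : Word T} (hC : C ∈ G.comps)
    (h : Relation.ReflTransGen (cfStep C.rules) u v) (hs : Sub G u) : Sub G v := by
  induction h with
  | refl => exact hs
  | tail _ h2 ih => exact sub_cfStep G hC h2 ih

lemma sub_sys {u v : Word T} (h : G.SysStep .t u v) (hs : Sub G u) : Sub G v := by
  obtain ⟨C, hC, hm, -, -⟩ := h
  exact sub_rt G hC hm.1 hs

lemma sub_reach {u : Word T} (h : Reach G u) : Sub G u := by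
  induction h with
  | refl => exact sub_start G
  | tail _ h2 ih => exact sub_sys G h2 ih

/-! #### enum facts and membership in the simulating system -/

lemma enum_comps_mem {i : ℕ} {C : RCComponent T} (h : (i, C) ∈ (enumL G.comps)) :
    C ∈ G.comps :=
  List.mem_of_getElem? (mem_enumL_iff.mp h)

lemma exists_enum {C : RCComponent T} (h : C ∈ G.comps) :
    ∃ i, (i, C) ∈ (enumL G.comps) := by
  obtain ⟨n, hn⟩ := List.mem_iff_getElem?.mp h
  exact ⟨n, mem_enumL_iff.mpr hn⟩

lemma enum_fun {i : ℕ} {C D : RCComponent T} (h1 : (i, C) ∈ (enumL G.comps))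
    (h2 : (i, D) ∈ (enumL G.comps)) : C = D := by
  rw [mem_enumL_iff] at h1 h2
  exact Option.some.inj (h1.symm.trans h2)

lemma Ecomp_mem {i : ℕ} {C : RCComponent T} (h : (i, C) ∈ (enumL G.comps)) :
    Ecomp G i C ∈ (simG G).comps :=
  List.mem_flatMap.mpr ⟨(i, C), h, by simp⟩

lemma Wcomp_mem {i : ℕ} {C : RCComponent T} (h : (i, C) ∈ (enumL G.comps)) :
    Wcomp i C ∈ (simG G).comps :=
  List.mem_flatMap.mpr ⟨(i, C), h, by simp⟩

lemma Xcomp_mem {i : ℕ} {C : RCComponent T} (h : (i, C) ∈ (enumL G.comps)) :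
    Xcomp G i ∈ (simG G).comps :=
  List.mem_flatMap.mpr ⟨(i, C), h, by simp⟩

lemma sim_comp_empty : ∀ C' ∈ (simG G).comps, C'.perm = ∅ ∧ C'.forb = ∅ := by
  intro C' hC'
  obtain ⟨p, -, hmem⟩ := List.mem_flatMap.mp hC'
  simp only [List.mem_cons, List.not_mem_nil, or_false] at hmem
  rcases hmem with rfl | rfl | rfl <;> simp [Ecomp, Wcomp, Xcomp]

lemma sim_sysStep {C' : RCComponent T} (hC' : C' ∈ (simG G).comps) {s s' : Word T}
    (hm : ModeRel (cfStep C'.rules) .t s s') : (simG G).SysStep .t s s' := by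
  obtain ⟨h1, h2⟩ := sim_comp_empty G C' hC'
  exact ⟨C', hC', hm, by simp [h1], by simp [h2]⟩

/-! #### key per-word computations -/

lemma map_E_free (i : ℕ) (C : RCComponent T) {u : Word T} (hsub : Sub G u)
    (hfree : ∀ A ∈ C.forb, Sum.inl A ∉ u) :
    (u.map (smap (Nat.pair 0))).map (rout (Ecomp G i C).rules (Eout i C))
      = u.map (smap (Nat.pair (i + 2))) := by
  rw [List.map_map]
  refine List.map_congr_left fun x hx => ?_
  cases x with
  | inl A =>
    simp only [Function.comp_apply, smap_inl]
    rw [rout_E_plain G i C (hsub A hx), if_neg (fun hf => hfree A hf hx)]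
  | inr t => rfl

lemma map_E_fail (i : ℕ) (C : RCComponent T) {u : Word T} {A : ℕ} (hA : A ∈ C.forb)
    (hAu : Sum.inl A ∈ u) (hsub : Sub G u) :
    Sum.inl Fail ∈ (u.map (smap (Nat.pair 0))).map (rout (Ecomp G i C).rules (Eout i C)) := by
  rw [List.map_map]
  refine List.mem_map.mpr ⟨Sum.inl A, hAu, ?_⟩
  simp only [Function.comp_apply, smap_inl]
  rw [rout_E_plain G i C (hsub A hAu), if_pos hA]

lemma map_X_tag (i : ℕ) {u : Word T} (hsub : Sub G u) :
    (u.map (smap (Nat.pair (i + 2)))).map (rout (Xcomp G i).rules Xout)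
      = u.map (smap (Nat.pair 0)) := by
  rw [List.map_map]
  refine List.map_congr_left fun x hx => ?_
  cases x with
  | inl A =>
    simp only [Function.comp_apply, smap_inl]
    exact rout_X_tag G i (hsub A hx)
  | inr t => rfl

/-! #### idleness of mismatching components -/

lemma no_pair_lhs {k k' : ℕ} (hk : k ≠ k') {u : Word T} {m : ℕ} :
    Sum.inl (Nat.pair k' m) ∉ u.map (smap (Nat.pair k)) := by
  intro hmem
  obtain ⟨B, -, hB⟩ := mem_map_smap_inl.mp hmem
  exact hk (Nat.pair_eq_pair.mp hB).1

lemma no_lhs_W {j k : ℕ} (hjk : j + 2 ≠ k) (D : RCComponent T) {u : Word T} :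
    ∀ r ∈ (Wcomp j D).rules, Sum.inl r.lhs ∉ u.map (smap (Nat.pair k)) := by
  intro r hr
  obtain ⟨r0, -, rfl⟩ := List.mem_map.mp hr
  exact no_pair_lhs (fun h => hjk h.symm)

lemma no_lhs_E {j k : ℕ} (hk : k ≠ 0) (D : RCComponent T) {u : Word T} :
    ∀ r ∈ (Ecomp G j D).rules, Sum.inl r.lhs ∉ u.map (smap (Nat.pair k)) := by
  intro r hr
  obtain ⟨A, -, rfl⟩ := List.mem_map.mp hr
  exact no_pair_lhs hk

lemma no_lhs_X {j k : ℕ} (hjk : j + 2 ≠ k) {u : Word T} :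
    ∀ r ∈ (Xcomp G j).rules, Sum.inl r.lhs ∉ u.map (smap (Nat.pair k)) := by
  intro r hr
  obtain ⟨A, -, rfl⟩ := List.mem_map.mp hr
  exact no_pair_lhs (fun h => hjk h.symm)

/-! #### the trap symbol is persistent -/

lemma fail_lhs_ne : ∀ C' ∈ (simG G).comps, ∀ r ∈ C'.rules, r.lhs ≠ Fail := by
  intro C' hC'
  obtain ⟨p, -, hmem⟩ := List.mem_flatMap.mp hC'
  simp only [List.mem_cons, List.not_mem_nil, or_false] at hmem
  rcases hmem with rfl | rfl | rfl <;> intro r hr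
  · obtain ⟨A, -, rfl⟩ := List.mem_map.mp hr
    intro h; rw [Fail, Nat.pair_eq_pair] at h; omega
  · obtain ⟨r0, -, rfl⟩ := List.mem_map.mp hr
    intro h; rw [Fail] at h
    have := (Nat.pair_eq_pair.mp h).1; omega
  · obtain ⟨A, -, rfl⟩ := List.mem_map.mp hr
    intro h; rw [Fail, Nat.pair_eq_pair] at h; omega

lemma fail_pres_cf {R : List (CFRule T)} (hR : ∀ r ∈ R, r.lhs ≠ Fail) {s s' : Word T}
    (hst : cfStep R s s') (hf : Sum.inl Fail ∈ s) : Sum.inl Fail ∈ s' := by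
  obtain ⟨r, hr, x, z, hu, hv⟩ := hst
  rw [hu] at hf
  rw [hv]
  simp only [List.append_assoc, List.mem_append, List.mem_singleton] at hf ⊢
  rcases hf with h | h | h
  · exact Or.inl h
  · exact absurd (Sum.inl.inj h).symm (hR r hr)
  · exact Or.inr (Or.inr h)

lemma fail_pres_rt {R : List (CFRule T)} (hR : ∀ r ∈ R, r.lhs ≠ Fail) {s s' : Word T}
    (h : Relation.ReflTransGen (cfStep R) s s') (hf : Sum.inl Fail ∈ s) :
    Sum.inl Fail ∈ s' := by
  induction h with
  | refl => exact hf
  | tail _ h2 ih => exact fail_pres_cf hR h2 ih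

/-! #### the invariant -/

def Inv (s : Word T) : Prop :=
  (∃ u, Reach G u ∧ Sub G u ∧ s = u.map (smap (Nat.pair 0))) ∨
  (∃ i C u, (i, C) ∈ (enumL G.comps) ∧ Reach G u ∧ Sub G u ∧
      s = u.map (smap (Nat.pair (i + 2))) ∧
      ((∀ A ∈ C.forb, Sum.inl A ∉ u) ∨ ∀ v, ¬ cfStep C.rules u v)) ∨
  Sum.inl Fail ∈ s

lemma inv_pres (hperm : ∀ C ∈ G.comps, C.perm = ∅) {s s' : Word T} (hI : Inv G s)
    (h : (simG G).SysStep .t s s') : Inv G s' := by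
  obtain ⟨C', hC'mem, hm, -, -⟩ := h
  rcases hI with ⟨u, hru, hsu, rfl⟩ | ⟨i, C, u, hiC, hru, hsu, rfl, hex⟩ | hfail
  · -- plain sentential form
    obtain ⟨⟨j, D⟩, hjD, hmem⟩ := List.mem_flatMap.mp hC'mem
    simp only [List.mem_cons, List.not_mem_nil, or_false] at hmem
    rcases hmem with rfl | rfl | rfl
    · -- entry component
      have hs' : s' = (u.map (smap (Nat.pair 0))).map (rout (Ecomp G j D).rules (Eout j D)) :=
        (rename_t_iff (Ecomp_hyp1 G j D) (Ecomp_hyp2 G j D)).mp hm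
      rcases Classical.em (∀ A ∈ D.forb, Sum.inl A ∉ u) with hfr | hfr
      · refine Or.inr (Or.inl ⟨j, D, u, hjD, hru, hsu, ?_, Or.inl hfr⟩)
        rw [hs', map_E_free G j D hsu hfr]
      · push_neg at hfr
        obtain ⟨A, hA, hAu⟩ := hfr
        refine Or.inr (Or.inr ?_)
        rw [hs']
        exact map_E_fail G j D hA hAu hsu
    · -- working component: idle on plain forms
      rw [modeT_idle (no_lhs_W (k := 0) (by omega) D) hm]
      exact Or.inl ⟨u, hru, hsu, rfl⟩
    · -- exit component: idle on plain forms
      rw [modeT_idle (no_lhs_X G (k := 0) (by omega)) hm]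
      exact Or.inl ⟨u, hru, hsu, rfl⟩
  · -- tagged sentential form
    obtain ⟨⟨j, D⟩, hjD, hmem⟩ := List.mem_flatMap.mp hC'mem
    simp only [List.mem_cons, List.not_mem_nil, or_false] at hmem
    rcases hmem with rfl | rfl | rfl
    · -- entry component: idle on tagged forms
      rw [modeT_idle (no_lhs_E G (k := i + 2) (by omega) D) hm]
      exact Or.inr (Or.inl ⟨i, C, u, hiC, hru, hsu, rfl, hex⟩)
    · -- working component
      by_cases hij : j = i
      · subst hij
        have hDC : D = C := enum_fun G hjD hiC
        subst hDC
        have hm' : ModeRel (cfStep (D.rules.map (mrule (Nat.pair (j + 2))))) .t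
            (u.map (smap (Nat.pair (j + 2)))) s' := hm
        rcases hex with hfree | hterm
        · obtain ⟨v, rfl, hmv⟩ := untag_modeT (pair_left_inj (j + 2)) hm'
          have hCmem : D ∈ G.comps := enum_comps_mem G hjD
          have hstepuv : G.SysStep .t u v :=
            ⟨D, hCmem, hmv, by simp [hperm D hCmem], hfree⟩
          exact Or.inr (Or.inl ⟨j, D, v, hjD, hru.tail hstepuv,
            sub_rt G hCmem hmv.1 hsu, rfl, Or.inr hmv.2⟩)
        · have : s' = u.map (smap (Nat.pair (j + 2))) := by
            refine modeT_of_no_step (fun w hw => ?_) hm'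
            obtain ⟨v, -, hst⟩ := untag_step (pair_left_inj (j + 2)) hw
            exact hterm v hst
          rw [this]
          exact Or.inr (Or.inl ⟨j, D, u, hjD, hru, hsu, rfl, Or.inr hterm⟩)
      · rw [modeT_idle (no_lhs_W (k := i + 2) (by omega) D) hm]
        exact Or.inr (Or.inl ⟨i, C, u, hiC, hru, hsu, rfl, hex⟩)
    · -- exit component
      by_cases hij : j = i
      · subst hij
        have hs' : s' = (u.map (smap (Nat.pair (j + 2)))).map (rout (Xcomp G j).rules Xout) :=
          (rename_t_iff (Xcomp_hyp1 G j) (Xcomp_hyp2 G j)).mp hm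
        refine Or.inl ⟨u, hru, hsu, ?_⟩
        rw [hs', map_X_tag G j hsu]
      · rw [modeT_idle (no_lhs_X G (k := i + 2) (by omega)) hm]
        exact Or.inr (Or.inl ⟨i, C, u, hiC, hru, hsu, rfl, hex⟩)
  · exact Or.inr (Or.inr (fail_pres_rt (fail_lhs_ne G C' hC'mem) hm.1 hfail))

/-! #### the backward simulation -/

lemma backward_step {u v : Word T} (h : G.SysStep .t u v) (hsub : Sub G u)
    (hsubv : Sub G v) :
    Relation.ReflTransGen ((simG G).SysStep .t)
      (u.map (smap (Nat.pair 0))) (v.map (smap (Nat.pair 0))) := by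
  obtain ⟨C, hC, hmCuv, -, hfree⟩ := h
  obtain ⟨i, hiC⟩ := exists_enum G hC
  have st1 : (simG G).SysStep .t (u.map (smap (Nat.pair 0)))
      (u.map (smap (Nat.pair (i + 2)))) := by
    refine sim_sysStep G (Ecomp_mem G hiC) ?_
    have hmd := (rename_t_iff (Ecomp_hyp1 G i C) (Ecomp_hyp2 G i C)).mpr
      (rfl : (u.map (smap (Nat.pair 0))).map (rout (Ecomp G i C).rules (Eout i C))
        = (u.map (smap (Nat.pair 0))).map (rout (Ecomp G i C).rules (Eout i C)))
    rwa [map_E_free G i C hsub hfree] at hmd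
  have st2 : (simG G).SysStep .t (u.map (smap (Nat.pair (i + 2))))
      (v.map (smap (Nat.pair (i + 2)))) := by
    refine sim_sysStep G (Wcomp_mem G hiC) ?_
    exact tag_modeT (pair_left_inj (i + 2)) hmCuv
  have st3 : (simG G).SysStep .t (v.map (smap (Nat.pair (i + 2))))
      (v.map (smap (Nat.pair 0))) := by
    refine sim_sysStep G (Xcomp_mem G hiC) ?_
    have hmd := (rename_t_iff (Xcomp_hyp1 G i) (Xcomp_hyp2 G i)).mpr
      (rfl : (v.map (smap (Nat.pair (i + 2)))).map (rout (Xcomp G i).rules Xout)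
        = (v.map (smap (Nat.pair (i + 2)))).map (rout (Xcomp G i).rules Xout))
    rwa [map_X_tag G i hsubv] at hmd
  exact Relation.ReflTransGen.head st1 (Relation.ReflTransGen.head st2
    (Relation.ReflTransGen.single st3))

lemma backward {u : Word T} (h : Reach G u) :
    Relation.ReflTransGen ((simG G).SysStep .t) [Sum.inl (simG G).start]
      (u.map (smap (Nat.pair 0))) := by
  induction h with
  | refl => exact .refl
  | @tail b c hab h2 ih =>
    exact ih.trans (backward_step G h2 (sub_reach G hab) (sub_reach G (hab.tail h2)))

/-! #### main language equality -/

lemma lang_eq (hperm : ∀ C ∈ G.comps, C.perm = ∅) :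
    (simG G).lang .t = G.lang .t := by
  ext w
  simp only [RCCDGS.lang, langOf, Set.mem_setOf_eq]
  constructor
  · intro h
    have key : ∀ s, Relation.ReflTransGen ((simG G).SysStep .t)
        [Sum.inl (simG G).start] s → Inv G s := by
      intro s hs
      induction hs with
      | refl => exact Or.inl ⟨[Sum.inl G.start], .refl, sub_start G, rfl⟩
      | tail _ h2 ih => exact inv_pres G hperm ih h2
    have hinv : Inv G (encodeWord w) := key _ h
    rcases hinv with ⟨u, hru, -, hmap⟩ | ⟨i, C, u, -, hru, -, hmap, -⟩ | hfail
    · rwa [map_smap_eq_encode hmap.symm] at hru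
    · rwa [map_smap_eq_encode hmap.symm] at hru
    · exfalso
      simp [encodeWord] at hfail
  · intro h
    have hb := backward G h
    rwa [encode_map_smap] at hb

lemma sim_ne (hne : G.NonErasing) : (simG G).NonErasing := by
  intro C' hC' r hr
  obtain ⟨⟨j, D⟩, hjD, hmem⟩ := List.mem_flatMap.mp hC'
  simp only [List.mem_cons, List.not_mem_nil, or_false] at hmem
  rcases hmem with rfl | rfl | rfl
  · obtain ⟨A, -, rfl⟩ := List.mem_map.mp hr; simp
  · obtain ⟨r0, hr0, rfl⟩ := List.mem_map.mp hr
    simpa [mrule, List.map_eq_nil_iff] using hne D (enum_comps_mem G hjD) r0 hr0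
  · obtain ⟨A, -, rfl⟩ := List.mem_map.mp hr; simp

end Sim

end CDfrcProof


/-- `CD(t, frc) = CD(t)` and `CD^{-λ}(t, frc) = CD^{-λ}(t)`. -/
theorem CDfrc_t_eq_CD_t (T : Type) [Fintype T] :
    CDfrc T .t = CD T .t ∧ CDfrcNE T .t = CDne T .t := by
  constructor
  · apply Set.Subset.antisymm
    · rintro L ⟨G, hperm, rfl⟩
      exact ⟨CDfrcProof.simG G, CDfrcProof.sim_comp_empty G,
        (CDfrcProof.lang_eq G hperm).symm⟩
    · rintro L ⟨G, h, rfl⟩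
      exact ⟨G, fun C hC => (h C hC).1, rfl⟩
  · apply Set.Subset.antisymm
    · rintro L ⟨G, hperm, hne, rfl⟩
      exact ⟨CDfrcProof.simG G, CDfrcProof.sim_comp_empty G, CDfrcProof.sim_ne G hne,
        (CDfrcProof.lang_eq G hperm).symm⟩
    · rintro L ⟨G, h, hne, rfl⟩
      exact ⟨G, fun C hC => (h C hC).1, hne, rfl⟩
end
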